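/- arXiv:2208.14407 — 8 statements merged into one kernel-verified Lean document; each statement's English description precedes it below -/
import Mathlib

section
/- Let M = (S, A, T, R) be a finite MDP with rewards in [0, Rmax], let φ : S → S̄ be a state abstraction, and let M̄ = (S̄, A, T̄, R̄) be an abstract MDP such that for all s̄, s̄' ∈ S̄, all s ∈ S with φ(s) = s̄, and all a ∈ A: |T̄(s̄'|s̄,a) − Σ_{s'∈φ⁻¹(s̄')} T(s'|s,a)| ≤ η_T and |R̄(s̄,a) − R(s,a)| ≤ η_R. Let π̄* be an abstract policy that is n-step optimal for M̄ for every horizon up to h. Then for every s ∈ S, V^{*,h}_M(s) − V^{π̄*∘φ, h}_M(s) ≤ 2·h·η_R + (h+1)·h·η_T·|S̄|·Rmax, where V^{*,h}_M is the h-step optimal value of M and V^{π̄*∘φ,h}_M is the h-step value in M of the policy s ↦ π̄*(φ(s)). -/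
/-- Undiscounted `n`-step value of policy `π` in the MDP with transitions `T`
and rewards `R`: `Vpol T R π 0 s = 0`, and
`Vpol T R π (n+1) s = R s (π s) + ∑ s', T s (π s) s' * Vpol T R π n s'`. -/
noncomputable def Vpol {S A : Type*} [Fintype S] (T : S → A → S → ℝ) (R : S → A → ℝ)
    (π : S → A) : ℕ → S → ℝ
  | 0, _ => 0
  | n + 1, s => R s (π s) + ∑ s' : S, T s (π s) s' * Vpol T R π n s'

/-- Undiscounted `n`-step optimal value of the MDP with transitions `T` and rewards `R`. -/
noncomputable def Vopt {S A : Type*} [Fintype S] [Fintype A] [Nonempty A]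
    (T : S → A → S → ℝ) (R : S → A → ℝ) : ℕ → S → ℝ
  | 0, _ => 0
  | n + 1, s => Finset.univ.sup' Finset.univ_nonempty
      (fun a => R s a + ∑ s' : S, T s a s' * Vopt T R n s')

lemma Vpol_bounds {S A : Type*} [Fintype S] [Fintype A] [Nonempty A]
    (T : S → A → S → ℝ) (R : S → A → ℝ) (Rmax : ℝ)
    (hT0 : ∀ s a s', 0 ≤ T s a s') (hT1 : ∀ s a, ∑ s', T s a s' = 1)
    (hR0 : ∀ s a, 0 ≤ R s a) (hR1 : ∀ s a, R s a ≤ Rmax) (π : S → A) :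
    ∀ n s, 0 ≤ Vpol T R π n s ∧ Vpol T R π n s ≤ (n : ℝ) * Rmax := by
  intro n
  induction n with
  | zero => intro s; simp [Vpol]
  | succ n ih =>
    intro s
    have hs0 : 0 ≤ ∑ s', T s (π s) s' * Vpol T R π n s' :=
      Finset.sum_nonneg fun s' _ => mul_nonneg (hT0 _ _ _) (ih s').1
    have h1 : ∑ s', T s (π s) s' * Vpol T R π n s' ≤ ∑ s' : S, T s (π s) s' * ((n : ℝ) * Rmax) :=
      Finset.sum_le_sum fun s' _ => mul_le_mul_of_nonneg_left (ih s').2 (hT0 _ _ _)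
    have h2 : ∑ s' : S, T s (π s) s' * ((n : ℝ) * Rmax) = (n : ℝ) * Rmax := by
      rw [← Finset.sum_mul, hT1]; ring
    have h3 := hR1 s (π s)
    have h4 := hR0 s (π s)
    constructor
    · simpa [Vpol] using add_nonneg h4 hs0
    · simp only [Vpol]
      push_cast
      nlinarith [h1, h2]

lemma Vopt_bounds {S A : Type*} [Fintype S] [Fintype A] [Nonempty A]
    (T : S → A → S → ℝ) (R : S → A → ℝ) (Rmax : ℝ)
    (hT0 : ∀ s a s', 0 ≤ T s a s') (hT1 : ∀ s a, ∑ s', T s a s' = 1)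
    (hR0 : ∀ s a, 0 ≤ R s a) (hR1 : ∀ s a, R s a ≤ Rmax) :
    ∀ n s, 0 ≤ Vopt T R n s ∧ Vopt T R n s ≤ (n : ℝ) * Rmax := by
  intro n
  induction n with
  | zero => intro s; simp [Vopt]
  | succ n ih =>
    intro s
    obtain ⟨a⟩ := ‹Nonempty A›
    constructor
    · have hs0 : 0 ≤ ∑ s', T s a s' * Vopt T R n s' :=
        Finset.sum_nonneg fun s' _ => mul_nonneg (hT0 _ _ _) (ih s').1
      have hle : R s a + ∑ s', T s a s' * Vopt T R n s' ≤ Vopt T R (n + 1) s := by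
        simp only [Vopt]
        exact Finset.le_sup' (fun b => R s b + ∑ s', T s b s' * Vopt T R n s')
          (Finset.mem_univ a)
      have := add_nonneg (hR0 s a) hs0
      linarith
    · simp only [Vopt]
      apply Finset.sup'_le
      intro b _
      have h1 : ∑ s', T s b s' * Vopt T R n s' ≤ ∑ s' : S, T s b s' * ((n : ℝ) * Rmax) :=
        Finset.sum_le_sum fun s' _ => mul_le_mul_of_nonneg_left (ih s').2 (hT0 _ _ _)
      have h2 : ∑ s' : S, T s b s' * ((n : ℝ) * Rmax) = (n : ℝ) * Rmax := by
        rw [← Finset.sum_mul, hT1]; ring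
      have h3 := hR1 s b
      push_cast
      nlinarith [h1, h2]

theorem stmt0 {S Sb A : Type*} [Fintype S] [Fintype Sb] [Fintype A]
    [Nonempty S] [Nonempty Sb] [Nonempty A] [DecidableEq Sb]
    -- the ground MDP M = (S, A, T, R), rewards in [0, Rmax]
    (T : S → A → S → ℝ) (R : S → A → ℝ) (Rmax : ℝ) (hRmax : 0 < Rmax)
    (hT0 : ∀ s a s', 0 ≤ T s a s') (hT1 : ∀ s a, ∑ s', T s a s' = 1)
    (hR0 : ∀ s a, 0 ≤ R s a) (hR1 : ∀ s a, R s a ≤ Rmax)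
    -- the state abstraction φ : S → Sb
    (φ : S → Sb) (hφ : Function.Surjective φ)
    -- the abstract MDP M̄ = (Sb, A, Tb, Rb)
    (Tb : Sb → A → Sb → ℝ) (Rb : Sb → A → ℝ)
    (hTb0 : ∀ sb a sb', 0 ≤ Tb sb a sb') (hTb1 : ∀ sb a, ∑ sb', Tb sb a sb' = 1)
    (hRb0 : ∀ sb a, 0 ≤ Rb sb a) (hRb1 : ∀ sb a, Rb sb a ≤ Rmax)
    -- approximate model similarity between M and M̄
    (ηT ηR : ℝ)
    (hsimT : ∀ s a sb', |Tb (φ s) a sb' -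
      ∑ s' ∈ Finset.univ.filter (fun s' => φ s' = sb'), T s a s'| ≤ ηT)
    (hsimR : ∀ s a, |Rb (φ s) a - R s a| ≤ ηR)
    -- the abstract policy πb is n-step optimal in M̄ for every horizon up to h
    (πb : Sb → A) (h : ℕ)
    (hopt : ∀ n ≤ h, ∀ sb, Vpol Tb Rb πb n sb = Vopt Tb Rb n sb)
    (s : S) :
    Vopt T R h s - Vpol T R (fun s => πb (φ s)) h s
      ≤ 2 * (h : ℝ) * ηR + ((h : ℝ) + 1) * (h : ℝ) * ηT * (Fintype.card Sb : ℝ) * Rmax := by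
  set c : ℝ := ηT * (Fintype.card Sb : ℝ) * Rmax with hc_def
  obtain ⟨s0⟩ := ‹Nonempty S›
  obtain ⟨a0⟩ := ‹Nonempty A›
  have hηR : 0 ≤ ηR := le_trans (abs_nonneg _) (hsimR s0 a0)
  have hηT : 0 ≤ ηT := le_trans (abs_nonneg _) (hsimT s0 a0 (φ s0))
  have hc : 0 ≤ c := by positivity
  have key : ∀ (a : A) (s : S) (W : Sb → ℝ) (B : ℝ), 0 ≤ B → (∀ sb, |W sb| ≤ B) →
      |(∑ sb' : Sb, Tb (φ s) a sb' * W sb') - ∑ s' : S, T s a s' * W (φ s')|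
        ≤ ηT * (Fintype.card Sb : ℝ) * B := by
    intro a s W B hB hW
    have hsplit : ∑ s' : S, T s a s' * W (φ s')
        = ∑ sb' : Sb, (∑ s' ∈ Finset.univ.filter (fun s' => φ s' = sb'), T s a s') * W sb' := by
      rw [← Finset.sum_fiberwise Finset.univ φ (fun s' => T s a s' * W (φ s'))]
      refine Finset.sum_congr rfl fun sb' _ => ?_
      rw [Finset.sum_mul]
      refine Finset.sum_congr rfl fun s' hs' => ?_
      have := (Finset.mem_filter.mp hs').2
      rw [this]
    rw [hsplit, ← Finset.sum_sub_distrib]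
    calc |∑ sb' : Sb, (Tb (φ s) a sb' * W sb'
            - (∑ s' ∈ Finset.univ.filter (fun s' => φ s' = sb'), T s a s') * W sb')|
        ≤ ∑ sb' : Sb, |Tb (φ s) a sb'
            - (∑ s' ∈ Finset.univ.filter (fun s' => φ s' = sb'), T s a s')| * |W sb'| := by
          refine le_trans (Finset.abs_sum_le_sum_abs _ _) (Finset.sum_le_sum fun sb' _ => ?_)
          rw [← sub_mul, abs_mul]
      _ ≤ ∑ sb' : Sb, ηT * B :=
          Finset.sum_le_sum fun sb' _ => mul_le_mul (hsimT s a sb') (hW sb')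
            (abs_nonneg _) hηT
      _ = ηT * (Fintype.card Sb : ℝ) * B := by
          simp [Finset.sum_const, Finset.card_univ]; ring
  have hVb := Vopt_bounds Tb Rb Rmax hTb0 hTb1 hRb0 hRb1
  have hVpb := Vpol_bounds Tb Rb Rmax hTb0 hTb1 hRb0 hRb1 πb
  have cmpOpt : ∀ n, ∀ s : S,
      Vopt T R n s ≤ Vopt Tb Rb n (φ s) + (n : ℝ) * ηR + (n : ℝ) * ((n : ℝ) - 1) / 2 * c := by
    intro n
    induction n with
    | zero => intro s; simp [Vopt]
    | succ n ih =>
      intro s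
      simp only [Vopt]
      apply Finset.sup'_le
      intro a _
      have hRcmp : R s a ≤ Rb (φ s) a + ηR := by
        have := abs_le.mp (hsimR s a); linarith [this.1]
      have hsum1 : ∑ s' : S, T s a s' * Vopt T R n s'
          ≤ ∑ s' : S, T s a s' * (Vopt Tb Rb n (φ s')
              + (n : ℝ) * ηR + (n : ℝ) * ((n : ℝ) - 1) / 2 * c) :=
        Finset.sum_le_sum fun s' _ => mul_le_mul_of_nonneg_left (ih s') (hT0 _ _ _)
      have hsum2 : ∑ s' : S, T s a s' * (Vopt Tb Rb n (φ s')
              + (n : ℝ) * ηR + (n : ℝ) * ((n : ℝ) - 1) / 2 * c)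
          = (∑ s' : S, T s a s' * Vopt Tb Rb n (φ s'))
              + ((n : ℝ) * ηR + (n : ℝ) * ((n : ℝ) - 1) / 2 * c) := by
        have e : ∀ s' : S, T s a s' * (Vopt Tb Rb n (φ s')
              + (n : ℝ) * ηR + (n : ℝ) * ((n : ℝ) - 1) / 2 * c)
            = T s a s' * Vopt Tb Rb n (φ s')
              + T s a s' * ((n : ℝ) * ηR + (n : ℝ) * ((n : ℝ) - 1) / 2 * c) :=
          fun s' => by ring
        rw [Finset.sum_congr rfl (fun s' _ => e s'), Finset.sum_add_distrib,
          ← Finset.sum_mul, hT1, one_mul]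
      have habs := key a s (Vopt Tb Rb n) ((n : ℝ) * Rmax)
        (by positivity) (fun sb => by
          rw [abs_of_nonneg (hVb n sb).1]; exact (hVb n sb).2)
      have hkey : ∑ s' : S, T s a s' * Vopt Tb Rb n (φ s')
          ≤ (∑ sb' : Sb, Tb (φ s) a sb' * Vopt Tb Rb n sb')
            + ηT * (Fintype.card Sb : ℝ) * ((n : ℝ) * Rmax) := by
        have := abs_le.mp habs; linarith [this.1]
      have hsup : Rb (φ s) a + ∑ sb' : Sb, Tb (φ s) a sb' * Vopt Tb Rb n sb'
          ≤ Finset.univ.sup' Finset.univ_nonempty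
            (fun b => Rb (φ s) b + ∑ sb' : Sb, Tb (φ s) b sb' * Vopt Tb Rb n sb') :=
        Finset.le_sup' (fun b => Rb (φ s) b + ∑ sb' : Sb, Tb (φ s) b sb' * Vopt Tb Rb n sb')
          (Finset.mem_univ a)
      have hnc : ηT * (Fintype.card Sb : ℝ) * ((n : ℝ) * Rmax) = (n : ℝ) * c := by
        rw [hc_def]; ring
      have hid : (n : ℝ) * ((n : ℝ) - 1) / 2 + (n : ℝ)
          = ((n : ℝ) + 1) * (((n : ℝ) + 1) - 1) / 2 := by ring
      push_cast
      linarith [hsum1, hsum2, hkey, hsup, hRcmp, hnc, hid]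
  have cmpPol : ∀ n, ∀ s : S,
      Vpol Tb Rb πb n (φ s) ≤ Vpol T R (fun s => πb (φ s)) n s
        + (n : ℝ) * ηR + (n : ℝ) * ((n : ℝ) - 1) / 2 * c := by
    intro n
    induction n with
    | zero => intro s; simp [Vpol]
    | succ n ih =>
      intro s
      simp only [Vpol]
      have hRcmp : Rb (φ s) (πb (φ s)) ≤ R s (πb (φ s)) + ηR := by
        have := abs_le.mp (hsimR s (πb (φ s))); linarith [this.2]
      have habs := key (πb (φ s)) s (Vpol Tb Rb πb n) ((n : ℝ) * Rmax)
        (by positivity) (fun sb => by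
          rw [abs_of_nonneg (hVpb n sb).1]; exact (hVpb n sb).2)
      have hkey : ∑ sb' : Sb, Tb (φ s) (πb (φ s)) sb' * Vpol Tb Rb πb n sb'
          ≤ (∑ s' : S, T s (πb (φ s)) s' * Vpol Tb Rb πb n (φ s'))
            + ηT * (Fintype.card Sb : ℝ) * ((n : ℝ) * Rmax) := by
        have := abs_le.mp habs; linarith [this.2]
      have hsum1 : ∑ s' : S, T s (πb (φ s)) s' * Vpol Tb Rb πb n (φ s')
          ≤ ∑ s' : S, T s (πb (φ s)) s' * (Vpol T R (fun s => πb (φ s)) n s'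
              + (n : ℝ) * ηR + (n : ℝ) * ((n : ℝ) - 1) / 2 * c) :=
        Finset.sum_le_sum fun s' _ => mul_le_mul_of_nonneg_left (ih s') (hT0 _ _ _)
      have hsum2 : ∑ s' : S, T s (πb (φ s)) s' * (Vpol T R (fun s => πb (φ s)) n s'
              + (n : ℝ) * ηR + (n : ℝ) * ((n : ℝ) - 1) / 2 * c)
          = (∑ s' : S, T s (πb (φ s)) s' * Vpol T R (fun s => πb (φ s)) n s')
              + ((n : ℝ) * ηR + (n : ℝ) * ((n : ℝ) - 1) / 2 * c) := by
        have e : ∀ s' : S, T s (πb (φ s)) s' * (Vpol T R (fun s => πb (φ s)) n s'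
              + (n : ℝ) * ηR + (n : ℝ) * ((n : ℝ) - 1) / 2 * c)
            = T s (πb (φ s)) s' * Vpol T R (fun s => πb (φ s)) n s'
              + T s (πb (φ s)) s' * ((n : ℝ) * ηR + (n : ℝ) * ((n : ℝ) - 1) / 2 * c) :=
          fun s' => by ring
        rw [Finset.sum_congr rfl (fun s' _ => e s'), Finset.sum_add_distrib,
          ← Finset.sum_mul, hT1, one_mul]
      have hnc : ηT * (Fintype.card Sb : ℝ) * ((n : ℝ) * Rmax) = (n : ℝ) * c := by
        rw [hc_def]; ring
      have hid : (n : ℝ) * ((n : ℝ) - 1) / 2 + (n : ℝ)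
          = ((n : ℝ) + 1) * (((n : ℝ) + 1) - 1) / 2 := by ring
      push_cast
      linarith [hsum1, hsum2, hkey, hRcmp, hnc, hid]
  have heq : Vpol Tb Rb πb h (φ s) = Vopt Tb Rb h (φ s) := hopt h le_rfl (φ s)
  have h1 := cmpOpt h s
  have h2 := cmpPol h s
  have hh : (0 : ℝ) ≤ (h : ℝ) := Nat.cast_nonneg h
  have hexp : 2 * (h : ℝ) * ηR + ((h : ℝ) + 1) * (h : ℝ) * ηT * (Fintype.card Sb : ℝ) * Rmax
      = 2 * (h : ℝ) * ηR + ((h : ℝ) + 1) * (h : ℝ) * c := by rw [hc_def]; ring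
  linarith [h1, h2, heq, hexp, mul_nonneg hh hc]
end

section
/- Let M = (S, A, T, R) be a finite MDP with rewards in [0, Rmax], let φ : S → S̄ be a state abstraction, and let M̄ = (S̄, A, T̄, R̄) be an abstract MDP such that for all s̄, s̄' ∈ S̄, all s ∈ S with φ(s) = s̄, and all a ∈ A: |T̄(s̄'|s̄,a) − Σ_{s'∈φ⁻¹(s̄')} T(s'|s,a)| ≤ η_T and |R̄(s̄,a) − R(s,a)| ≤ η_R. Fix a discount γ ∈ [0,1) and let π̄* be an abstract policy that is optimal for the γ-discounted problem in M̄. Then for every s ∈ S, V^*_M(s) − V^{π̄*∘φ}_M(s) ≤ 2η_R/(1−γ) + 2γ·η_T·|S̄|·Rmax/(1−γ)², where V^*_M is the γ-discounted optimal value of M and V^{π̄*∘φ}_M is the γ-discounted value in M of the policy s ↦ π̄*(φ(s)). -/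
theorem sup'_abs_sub_le {α : Type*} (t : Finset α) (ht : t.Nonempty)
    (f g : α → ℝ) (c : ℝ) (h : ∀ a ∈ t, |f a - g a| ≤ c) :
    |t.sup' ht f - t.sup' ht g| ≤ c := by
  rw [abs_sub_le_iff]
  constructor
  · rw [sub_le_iff_le_add]
    apply Finset.sup'_le
    intro a ha
    have := (abs_sub_le_iff.1 (h a ha)).1
    have h2 : f a ≤ g a + c := by linarith
    exact h2.trans (by linarith [Finset.le_sup' g ha])
  · rw [sub_le_iff_le_add]
    apply Finset.sup'_le
    intro a ha
    have := (abs_sub_le_iff.1 (h a ha)).2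
    have h2 : g a ≤ f a + c := by linarith
    exact h2.trans (by linarith [Finset.le_sup' f ha])


theorem stmt1 {S Sb A : Type*} [Fintype S] [Fintype Sb] [Fintype A]
    [Nonempty S] [Nonempty Sb] [Nonempty A] [DecidableEq Sb]
    -- the ground MDP M = (S, A, T, R), rewards in [0, Rmax]
    (T : S → A → S → ℝ) (R : S → A → ℝ) (Rmax : ℝ) (hRmax : 0 < Rmax)
    (hT0 : ∀ s a s', 0 ≤ T s a s') (hT1 : ∀ s a, ∑ s', T s a s' = 1)
    (hR0 : ∀ s a, 0 ≤ R s a) (hR1 : ∀ s a, R s a ≤ Rmax)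
    -- the state abstraction φ : S → Sb
    (φ : S → Sb) (hφ : Function.Surjective φ)
    -- the abstract MDP M̄ = (Sb, A, Tb, Rb)
    (Tb : Sb → A → Sb → ℝ) (Rb : Sb → A → ℝ)
    (hTb0 : ∀ sb a sb', 0 ≤ Tb sb a sb') (hTb1 : ∀ sb a, ∑ sb', Tb sb a sb' = 1)
    (hRb0 : ∀ sb a, 0 ≤ Rb sb a) (hRb1 : ∀ sb a, Rb sb a ≤ Rmax)
    -- approximate model similarity between M and M̄
    (ηT ηR : ℝ)
    (hsimT : ∀ s a sb', |Tb (φ s) a sb' -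
      ∑ s' ∈ Finset.univ.filter (fun s' => φ s' = sb'), T s a s'| ≤ ηT)
    (hsimR : ∀ s a, |Rb (φ s) a - R s a| ≤ ηR)
    -- the discount factor
    (γ : ℝ) (hγ0 : 0 ≤ γ) (hγ1 : γ < 1)
    -- the abstract policy πb and its γ-discounted value Vb in M̄
    (πb : Sb → A)
    (Vb : Sb → ℝ)
    (hVb : ∀ sb, Vb sb = Rb sb (πb sb) + γ * ∑ sb', Tb sb (πb sb) sb' * Vb sb')
    -- the γ-discounted optimal value Vbs of M̄
    (Vbs : Sb → ℝ)
    (hVbs : ∀ sb, Vbs sb = Finset.univ.sup' Finset.univ_nonempty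
      (fun a => Rb sb a + γ * ∑ sb', Tb sb a sb' * Vbs sb'))
    -- πb is optimal for the γ-discounted problem in M̄
    (hoptπ : ∀ sb, Vb sb = Vbs sb)
    -- the γ-discounted value V of the induced policy πb ∘ φ in M
    (V : S → ℝ)
    (hV : ∀ s, V s = R s (πb (φ s)) + γ * ∑ s', T s (πb (φ s)) s' * V s')
    -- the γ-discounted optimal value Vs of M
    (Vs : S → ℝ)
    (hVs : ∀ s, Vs s = Finset.univ.sup' Finset.univ_nonempty
      (fun a => R s a + γ * ∑ s', T s a s' * Vs s'))
    (s : S) :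
    Vs s - V s ≤ 2 * ηR / (1 - γ) +
      2 * γ * ηT * (Fintype.card Sb : ℝ) * Rmax / (1 - γ) ^ 2 := by
  
  classical
  have hγ' : 0 < 1 - γ := by linarith
  set Vmax : ℝ := Rmax / (1 - γ) with hVmaxdef
  have hVmax0 : 0 ≤ Vmax := le_of_lt (div_pos hRmax hγ')
  obtain ⟨s0⟩ := (inferInstance : Nonempty S)
  obtain ⟨a0⟩ := (inferInstance : Nonempty A)
  have hηR : 0 ≤ ηR := le_trans (abs_nonneg _) (hsimR s0 a0)
  have hηT : 0 ≤ ηT := le_trans (abs_nonneg _) (hsimT s0 a0 (φ s0))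
  -- bound on the optimal abstract value
  have hM : ∀ sb, |Vbs sb| ≤ Vmax := by
    set Mv : ℝ := Finset.univ.sup' Finset.univ_nonempty (fun sb => |Vbs sb|) with hMv
    have hle : ∀ sb, |Vbs sb| ≤ Mv := fun sb =>
      Finset.le_sup' (fun sb => |Vbs sb|) (Finset.mem_univ sb)
    have hMv0 : 0 ≤ Mv := le_trans (abs_nonneg _) (hle (φ s0))
    have hsum : ∀ sb a, |∑ sb', Tb sb a sb' * Vbs sb'| ≤ Mv := by
      intro sb a
      calc |∑ sb', Tb sb a sb' * Vbs sb'| ≤ ∑ sb', |Tb sb a sb' * Vbs sb'| :=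
            Finset.abs_sum_le_sum_abs _ _
        _ ≤ ∑ sb', Tb sb a sb' * Mv := by
            apply Finset.sum_le_sum
            intro sb' _
            rw [abs_mul, abs_of_nonneg (hTb0 sb a sb')]
            exact mul_le_mul_of_nonneg_left (hle sb') (hTb0 sb a sb')
        _ = Mv := by rw [← Finset.sum_mul, hTb1, one_mul]
    have hrec : Mv ≤ Rmax + γ * Mv := by
      apply Finset.sup'_le
      intro sb _
      rw [hVbs sb, abs_le]
      constructor
      · have h3 : Rb sb a0 + γ * ∑ sb', Tb sb a0 sb' * Vbs sb' ≤
            Finset.univ.sup' Finset.univ_nonempty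
              (fun a => Rb sb a + γ * ∑ sb', Tb sb a sb' * Vbs sb') :=
          Finset.le_sup' (fun a => Rb sb a + γ * ∑ sb', Tb sb a sb' * Vbs sb')
            (Finset.mem_univ a0)
        have h1 := (abs_le.1 (hsum sb a0)).1
        have h2 := hRb0 sb a0
        nlinarith
      · apply Finset.sup'_le
        intro a _
        have h1 := (abs_le.1 (hsum sb a)).2
        have h2 := hRb1 sb a
        nlinarith
    intro sb
    refine (hle sb).trans ?_
    rw [hVmaxdef, le_div_iff₀ hγ']
    nlinarith
  have hMb : ∀ sb, |Vb sb| ≤ Vmax := fun sb => by rw [hoptπ]; exact hM sb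
  -- the core per-action estimate
  have core : ∀ (W : S → ℝ) (Wb : Sb → ℝ), (∀ sb, |Wb sb| ≤ Vmax) →
      ∀ (Dbd : ℝ), (∀ s', |W s' - Wb (φ s')| ≤ Dbd) →
      ∀ (t : S) (a : A),
      |(Rb (φ t) a + γ * ∑ sb', Tb (φ t) a sb' * Wb sb') -
        (R t a + γ * ∑ s', T t a s' * W s')| ≤
      (ηR + γ * (ηT * (Fintype.card Sb : ℝ) * Vmax)) + γ * Dbd := by
    intro W Wb hWb Dbd hDbd t a
    set p : Sb → ℝ := fun sb' => ∑ s' ∈ Finset.univ.filter (fun s' => φ s' = sb'), T t a s'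
      with hp
    have key : ∑ s', T t a s' * Wb (φ s') = ∑ sb', p sb' * Wb sb' := by
      rw [← Finset.sum_fiberwise Finset.univ φ (fun s' => T t a s' * Wb (φ s'))]
      refine Finset.sum_congr rfl fun sb' _ => ?_
      rw [hp, Finset.sum_mul]
      refine Finset.sum_congr rfl fun s' hs' => ?_
      rw [(Finset.mem_filter.1 hs').2]
    have split : (Rb (φ t) a + γ * ∑ sb', Tb (φ t) a sb' * Wb sb') -
        (R t a + γ * ∑ s', T t a s' * W s') =
        (Rb (φ t) a - R t a) +
        γ * ((∑ sb', (Tb (φ t) a sb' - p sb') * Wb sb') -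
          ∑ s', T t a s' * (W s' - Wb (φ s'))) := by
      have e1 : ∑ sb', (Tb (φ t) a sb' - p sb') * Wb sb' =
          (∑ sb', Tb (φ t) a sb' * Wb sb') - ∑ sb', p sb' * Wb sb' := by
        rw [← Finset.sum_sub_distrib]
        exact Finset.sum_congr rfl fun sb' _ => by ring
      have e2 : ∑ s', T t a s' * (W s' - Wb (φ s')) =
          (∑ s', T t a s' * W s') - ∑ s', T t a s' * Wb (φ s') := by
        rw [← Finset.sum_sub_distrib]
        exact Finset.sum_congr rfl fun s' _ => by ring
      rw [e1, e2, key]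
      ring
    rw [split]
    have b1 : |∑ sb', (Tb (φ t) a sb' - p sb') * Wb sb'| ≤
        (Fintype.card Sb : ℝ) * (ηT * Vmax) := by
      calc |∑ sb', (Tb (φ t) a sb' - p sb') * Wb sb'| ≤
            ∑ sb', |(Tb (φ t) a sb' - p sb') * Wb sb'| := Finset.abs_sum_le_sum_abs _ _
        _ ≤ ∑ _sb' : Sb, ηT * Vmax := by
            apply Finset.sum_le_sum
            intro sb' _
            rw [abs_mul]
            exact mul_le_mul (hsimT t a sb') (hWb sb') (abs_nonneg _) hηT
        _ = (Fintype.card Sb : ℝ) * (ηT * Vmax) := by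
            rw [Finset.sum_const, Finset.card_univ, nsmul_eq_mul]
    have b2 : |∑ s', T t a s' * (W s' - Wb (φ s'))| ≤ Dbd := by
      calc |∑ s', T t a s' * (W s' - Wb (φ s'))| ≤
            ∑ s', |T t a s' * (W s' - Wb (φ s'))| := Finset.abs_sum_le_sum_abs _ _
        _ ≤ ∑ s', T t a s' * Dbd := by
            apply Finset.sum_le_sum
            intro s' _
            rw [abs_mul, abs_of_nonneg (hT0 t a s')]
            exact mul_le_mul_of_nonneg_left (hDbd s') (hT0 t a s')
        _ = Dbd := by rw [← Finset.sum_mul, hT1, one_mul]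
    have b3 := hsimR t a
    calc |(Rb (φ t) a - R t a) +
          γ * ((∑ sb', (Tb (φ t) a sb' - p sb') * Wb sb') -
            ∑ s', T t a s' * (W s' - Wb (φ s')))| ≤
          |Rb (φ t) a - R t a| +
          |γ * ((∑ sb', (Tb (φ t) a sb' - p sb') * Wb sb') -
            ∑ s', T t a s' * (W s' - Wb (φ s')))| := abs_add_le _ _
      _ ≤ ηR + γ * ((Fintype.card Sb : ℝ) * (ηT * Vmax) + Dbd) := by
          rw [abs_mul, abs_of_nonneg hγ0]
          have h4 : |(∑ sb', (Tb (φ t) a sb' - p sb') * Wb sb') -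
              ∑ s', T t a s' * (W s' - Wb (φ s'))| ≤
              (Fintype.card Sb : ℝ) * (ηT * Vmax) + Dbd :=
            (abs_sub _ _).trans (add_le_add b1 b2)
          have := mul_le_mul_of_nonneg_left h4 hγ0
          linarith
      _ = (ηR + γ * (ηT * (Fintype.card Sb : ℝ) * Vmax)) + γ * Dbd := by ring
  set c : ℝ := ηR + γ * (ηT * (Fintype.card Sb : ℝ) * Vmax) with hc
  -- contraction bound for Vs vs Vbs
  set D : ℝ := Finset.univ.sup' Finset.univ_nonempty (fun t => |Vs t - Vbs (φ t)|) with hD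
  have hD1 : ∀ t, |Vs t - Vbs (φ t)| ≤ D := fun t =>
    Finset.le_sup' (fun t => |Vs t - Vbs (φ t)|) (Finset.mem_univ t)
  have hDrec : D ≤ c + γ * D := by
    apply Finset.sup'_le
    intro t _
    rw [hVs t, hVbs (φ t)]
    apply sup'_abs_sub_le
    intro a _
    rw [abs_sub_comm]
    exact core Vs Vbs hM D hD1 t a
  have hDle : D ≤ c / (1 - γ) := by
    rw [le_div_iff₀ hγ']
    nlinarith
  -- contraction bound for V vs Vb
  set E : ℝ := Finset.univ.sup' Finset.univ_nonempty (fun t => |V t - Vb (φ t)|) with hE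
  have hE1 : ∀ t, |V t - Vb (φ t)| ≤ E := fun t =>
    Finset.le_sup' (fun t => |V t - Vb (φ t)|) (Finset.mem_univ t)
  have hErec : E ≤ c + γ * E := by
    apply Finset.sup'_le
    intro t _
    rw [hV t, hVb (φ t)]
    rw [abs_sub_comm]
    exact core V Vb hMb E hE1 t (πb (φ t))
  have hEle : E ≤ c / (1 - γ) := by
    rw [le_div_iff₀ hγ']
    nlinarith
  -- combine
  have h1 : Vs s - Vbs (φ s) ≤ D := (le_abs_self _).trans (hD1 s)
  have h2 : Vb (φ s) - V s ≤ E := by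
    have := hE1 s
    rw [abs_sub_comm] at this
    exact (le_abs_self _).trans this
  have h3 : Vs s - V s ≤ D + E := by
    have := hoptπ (φ s)
    linarith
  have h4 : D + E ≤ 2 * c / (1 - γ) := by
    calc D + E ≤ c / (1 - γ) + c / (1 - γ) := add_le_add hDle hEle
      _ = 2 * c / (1 - γ) := by ring
  refine h3.trans (h4.trans (le_of_eq ?_))
  rw [hc, hVmaxdef]
  field_simp
end

section
/- Let S̄ be a finite set and let Ȳ^{(1)}, …, Ȳ^{(m)} be independent S̄-valued random variables, where Ȳ^{(i)} has distribution μ_i on S̄. Define the empirical distribution P_Y(s̄') = (1/m)·Σ_{i=1}^m 1{Ȳ^{(i)} = s̄'} and the average distribution P̄(s̄') = (1/m)·Σ_{i=1}^m μ_i(s̄'). Then for all ε > 0, Pr( Σ_{s̄'∈S̄} |P_Y(s̄') − P̄(s̄')| ≥ ε ) ≤ (2^{|S̄|} − 2)·exp(−m·ε²/2). -/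
open MeasureTheory ProbabilityTheory Finset

/-! The L¹ distance between two vectors with the same total mass is twice the largest excess
`P_Y(A) - P̄(A)` over sets `A`, attained at the set where `P_Y > P̄`, which is nonempty and
proper as soon as the distance is positive. For a fixed `A`, `m (P_Y(A) - P̄(A))` is a sum of `m`
independent centred indicators, so Hoeffding's inequality bounds the probability that it reaches
`m ε / 2` by `exp (-m ε² / 2)`; a union bound over the `2 ^ |S̄| - 2` candidate sets
concludes. -/

lemma Finset.sum_abs_eq_two_mul_sum_filter_pos {S : Type*} [Fintype S] {f : S → ℝ}
    (hf : ∑ s, f s = 0) : ∑ s, |f s| = 2 * ∑ s with 0 < f s, f s := by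
  have habs : ∀ s, |f s| = 2 * (if 0 < f s then f s else 0) - f s := fun s => by
    split_ifs with h
    · rw [abs_of_pos h]; ring
    · rw [abs_of_nonpos (not_lt.1 h)]; ring
  simp only [habs, sum_sub_distrib, ← mul_sum, hf, sum_filter, sub_zero]

lemma Finset.exists_proper_nonempty_half_le_sum {S : Type*} [Fintype S] [DecidableEq S]
    {f : S → ℝ} (hf : ∑ s, f s = 0) {c : ℝ} (hc : 0 < c) (hcf : c ≤ ∑ s, |f s|) :
    ∃ A ∈ (univ : Finset (Finset S)) \ {∅, univ}, c / 2 ≤ ∑ s ∈ A, f s := by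
  have hpos : c / 2 ≤ ∑ s with 0 < f s, f s := by
    rw [sum_abs_eq_two_mul_sum_filter_pos hf] at hcf; linarith
  have hpos' : 0 < ∑ s with 0 < f s, f s := by linarith
  refine ⟨_, ?_, hpos⟩
  simp only [mem_sdiff, mem_univ, mem_insert, mem_singleton, true_and, not_or]
  constructor <;> intro h <;> simp [h, hf] at hpos'

lemma Finset.card_univ_sdiff_empty_univ (S : Type*) [Fintype S] [DecidableEq S] [Nonempty S] :
    #((univ : Finset (Finset S)) \ {∅, univ}) = 2 ^ Fintype.card S - 2 := by
  rw [card_univ_sdiff, Fintype.card_finset, card_pair_eq_two_iff.2 univ_nonempty.ne_empty.symm]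

namespace ProbabilityTheory

variable {Ω S ι : Type*} [MeasurableSpace Ω] {μ : Measure Ω} [MeasurableSpace S] [Fintype ι]
  {Y : ι → Ω → S}

lemma measureReal_sum_indicator_sub_ge_le [IsProbabilityMeasure μ]
    (hY : ∀ i, Measurable (Y i)) (hindep : iIndepFun Y μ)
    {A : Set S} (hA : MeasurableSet A) {δ : ℝ} (hδ : 0 ≤ δ) :
    μ.real {ω | Fintype.card ι * δ ≤ ∑ i, (A.indicator 1 (Y i ω) - μ.real (Y i ⁻¹' A))}
      ≤ Real.exp (-2 * Fintype.card ι * δ ^ 2) := by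
  set X : ι → Ω → ℝ := fun i ω => A.indicator 1 (Y i ω)
  have hXmeas : ∀ i, Measurable (X i) := fun i => (measurable_one.indicator hA).comp (hY i)
  have hmean : ∀ i, μ[X i] = μ.real (Y i ⁻¹' A) := fun i => by
    rw [← integral_indicator_one (hY i hA)]; rfl
  have hsubG : ∀ i ∈ univ, HasSubgaussianMGF (fun ω => X i ω - μ.real (Y i ⁻¹' A))
      ((‖(1 : ℝ) - 0‖₊ / 2) ^ 2) μ := fun i _ => by
    rw [← hmean]
    refine hasSubgaussianMGF_of_mem_Icc (hXmeas i).aemeasurable (ae_of_all _ fun ω => ?_)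
    simp only [X, Set.indicator, Pi.one_apply]
    split_ifs <;> simp
  have hindepX : iIndepFun (fun i ω => X i ω - μ.real (Y i ⁻¹' A)) μ :=
    hindep.comp (fun i s => A.indicator 1 s - μ.real (Y i ⁻¹' A))
      fun i => (measurable_one.indicator hA).sub_const _
  refine (HasSubgaussianMGF.measure_sum_ge_le_of_iIndepFun hindepX hsubG
    (by positivity)).trans_eq ?_
  simp only [sub_zero, nnnorm_one, sum_const, card_univ, nsmul_eq_mul]
  rcases (Fintype.card ι).eq_zero_or_pos with hι | hι
  · simp [hι]
  · congr 1
    push_cast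
    field_simp

lemma sum_sum_ite_sub_measureReal_eq [IsFiniteMeasure μ] [MeasurableSingletonClass S]
    [DecidableEq S] (hY : ∀ i, Measurable (Y i)) (A : Finset S) (ω : Ω) :
    ∑ s ∈ A, ∑ i, ((if Y i ω = s then (1 : ℝ) else 0) - μ.real {ω | Y i ω = s})
      = ∑ i, ((A : Set S).indicator 1 (Y i ω) - μ.real (Y i ⁻¹' A)) := by
  rw [sum_comm]
  refine sum_congr rfl fun i _ => ?_
  rw [sum_sub_distrib, sum_ite_eq, ← sum_measureReal_preimage_singleton A
    fun s _ => hY i (measurableSet_singleton s)]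
  simp only [Set.indicator, mem_coe, Pi.one_apply]
  rfl

lemma setOf_le_sum_abs_sub_subset_biUnion [IsProbabilityMeasure μ] [MeasurableSingletonClass S]
    [Fintype S] [DecidableEq S] (hY : ∀ i, Measurable (Y i)) {ε : ℝ} (hε : 0 < ε) :
    {ω | ε ≤ ∑ s,
        |(1 / (Fintype.card ι : ℝ)) * ∑ i, (if Y i ω = s then (1 : ℝ) else 0)
          - (1 / (Fintype.card ι : ℝ)) * ∑ i, μ.real {ω | Y i ω = s}|}
      ⊆ ⋃ A ∈ (univ : Finset (Finset S)) \ {∅, univ},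
          {ω | Fintype.card ι * (ε / 2)
            ≤ ∑ i, ((A : Set S).indicator 1 (Y i ω) - μ.real (Y i ⁻¹' A))} := by
  intro ω hω
  set n : ℝ := (Fintype.card ι : ℝ)
  set f : S → ℝ := fun s =>
    ∑ i, ((if Y i ω = s then (1 : ℝ) else 0) - μ.real {ω | Y i ω = s})
  have hf : ∑ s, f s = 0 := by
    simpa only [coe_univ, Set.indicator_univ, Pi.one_apply, Set.preimage_univ, probReal_univ,
      sub_self, sum_const_zero] using
      sum_sum_ite_sub_measureReal_eq (μ := μ) hY univ ω
  have hω' : ε ≤ 1 / n * ∑ s, |f s| := by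
    simpa only [Set.mem_ofPred_eq, f, ← mul_sub, ← sum_sub_distrib, abs_mul, ← mul_sum,
      abs_of_nonneg (by positivity : 0 ≤ 1 / n)] using hω
  have hn : 0 < n := by
    by_contra! h
    have : ε ≤ 0 := by simpa [le_antisymm h (Nat.cast_nonneg _)] using hω'
    linarith
  obtain ⟨A, hA, hfA⟩ := exists_proper_nonempty_half_le_sum hf (mul_pos hn hε)
    (by rwa [one_div, ← div_eq_inv_mul, le_div_iff₀ hn, mul_comm] at hω')
  refine Set.mem_biUnion hA ?_
  show n * (ε / 2) ≤ _
  rwa [← sum_sum_ite_sub_measureReal_eq hY, ← mul_div_assoc]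

end ProbabilityTheory

theorem stmt2 {Ω : Type*} [MeasurableSpace Ω] (μ : Measure Ω) [IsProbabilityMeasure μ]
    {Sb : Type*} [Fintype Sb] [Nonempty Sb] [DecidableEq Sb]
    [MeasurableSpace Sb] [MeasurableSingletonClass Sb]
    -- independent Sb-valued random variables Y 1, ..., Y m
    (m : ℕ) (Y : Fin m → Ω → Sb) (hYmeas : ∀ i, Measurable (Y i))
    (hindep : iIndepFun Y μ)
    -- Y i has distribution μi i
    (μi : Fin m → Sb → ℝ)
    (hdist : ∀ i sb, (μ {ω | Y i ω = sb}).toReal = μi i sb)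
    (ε : ℝ) (hε : 0 < ε) :
    -- Pr(‖P_Y − P̄‖₁ ≥ ε) ≤ (2^|Sb| − 2)·exp(−m·ε²/2)
    μ {ω | ε ≤ ∑ sb : Sb,
        |(1 / (m : ℝ)) * ∑ i, (if Y i ω = sb then (1 : ℝ) else 0)
          - (1 / (m : ℝ)) * ∑ i, μi i sb|}
      ≤ ENNReal.ofReal ((2 ^ (Fintype.card Sb) - 2) * Real.exp (-(m : ℝ) * ε ^ 2 / 2)) := by
  obtain rfl : μi = fun i s => μ.real {ω | Y i ω = s} := funext₂ fun i s => (hdist i s).symm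
  have hcover := setOf_le_sum_abs_sub_subset_biUnion (μ := μ) hYmeas hε
  rw [Fintype.card_fin] at hcover
  have hT : ∀ A : Finset Sb, μ.real {ω | m * (ε / 2)
      ≤ ∑ i, ((A : Set Sb).indicator 1 (Y i ω) - μ.real (Y i ⁻¹' A))}
        ≤ Real.exp (-(m : ℝ) * ε ^ 2 / 2) := fun A => by
    have h := measureReal_sum_indicator_sub_ge_le hYmeas hindep A.measurableSet
      (by positivity : 0 ≤ ε / 2)
    rw [Fintype.card_fin] at h
    exact h.trans_eq (by ring_nf)
  rw [← ofReal_measureReal]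
  refine ENNReal.ofReal_le_ofReal ?_
  calc _ ≤ _ := measureReal_mono hcover (measure_ne_top _ _)
    _ ≤ _ := measureReal_biUnion_finset_le _ _
    _ ≤ _ := sum_le_sum fun A _ => hT A
    _ = _ := by
      rw [sum_const, card_univ_sdiff_empty_univ, nsmul_eq_mul,
        Nat.cast_sub (Nat.le_self_pow Fintype.card_ne_zero 2), Nat.cast_pow, Nat.cast_ofNat]
end

section
/- Let S̄ be a finite set, let (Ω, 𝓕, P) be a probability space with a filtration (𝓕_i)_{i=0}^{N}, and let Ȳ^{(1)}, …, Ȳ^{(N)} be S̄-valued random variables such that Ȳ^{(i)} is 𝓕_i-measurable, and for each i there is an 𝓕_{i−1}-measurable random probability vector T_i on S̄ such that P(Ȳ^{(i)} = s̄' | 𝓕_{i−1}) = T_i(s̄') almost surely for every s̄' ∈ S̄. Define the empirical distribution P_Y(s̄') = (1/N)·Σ_{i=1}^N 1{Ȳ^{(i)} = s̄'} and the averaged conditional distribution P_T(s̄') = (1/N)·Σ_{i=1}^N T_i(s̄'). Then for every ε > 0, with probability at least 1 − 2^{|S̄|}·exp(−N·ε²/8), we have Σ_{s̄'∈S̄}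 |P_Y(s̄') − P_T(s̄')| ≤ ε. -/
/-!
For a set `A` of abstract states, the increments `1{Ȳ⁽ⁱ⁾ ∈ A} - Tᵢ(A)` form a martingale
difference sequence with values in `[-1, 1]`. By convexity `exp (l d) ≤ cosh l + d sinh l` on
`[-1, 1]`, so conditioning step by step bounds the moment generating function of their sum by
`(cosh l)^N ≤ exp (N l² / 2)`; Chernoff's bound with `l = ε / 2` gives
`P(N (P_Y(A) - P_T(A)) ≥ N ε / 2) ≤ exp (-N ε² / 8)` (Azuma–Hoeffding). Since `P_Y` and `P_T`
both have total mass one, `‖P_Y - P_T‖₁ = 2 max_A (P_Y(A) - P_T(A))`, so a union bound over the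
`2^|S̄|` sets `A` finishes the proof.
-/

open MeasureTheory ProbabilityTheory Real Finset
open scoped ENNReal

lemma exp_mul_le_cosh_add_mul_sinh (l : ℝ) {d : ℝ} (hd : |d| ≤ 1) :
    exp (l * d) ≤ cosh l + d * sinh l := by
  obtain ⟨hd₁, hd₂⟩ := abs_le.1 hd
  have h := convexOn_exp.2 (Set.mem_univ (-l)) (Set.mem_univ l)
    (by linarith : 0 ≤ (1 - d) / 2) (by linarith : 0 ≤ (1 + d) / 2) (by ring)
  simp only [smul_eq_mul] at h
  rw [show (1 - d) / 2 * -l + (1 + d) / 2 * l = l * d by ring] at h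
  rw [cosh_eq, sinh_eq]
  linarith

lemma sum_abs_le_two_mul_of_sum_eq_zero {ι : Type*} (s : Finset ι) {x : ι → ℝ} {c : ℝ}
    (hx : ∑ i ∈ s, x i = 0) (hc : ∀ t ⊆ s, ∑ i ∈ t, x i ≤ c) : ∑ i ∈ s, |x i| ≤ 2 * c := by
  have hsplit : ∑ i ∈ s with 0 ≤ x i, x i + ∑ i ∈ s with ¬0 ≤ x i, x i = 0 :=
    (sum_filter_add_sum_filter_not s (fun i ↦ 0 ≤ x i) x).trans hx
  have hsplit_abs :
      ∑ i ∈ s, |x i| = ∑ i ∈ s with 0 ≤ x i, |x i| + ∑ i ∈ s with ¬0 ≤ x i, |x i| :=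
    (sum_filter_add_sum_filter_not s (fun i ↦ 0 ≤ x i) _).symm
  have hpos : ∑ i ∈ s with 0 ≤ x i, |x i| = ∑ i ∈ s with 0 ≤ x i, x i :=
    sum_congr rfl fun i hi ↦ abs_of_nonneg (mem_filter.1 hi).2
  have hneg : ∑ i ∈ s with ¬0 ≤ x i, |x i| = -∑ i ∈ s with ¬0 ≤ x i, x i := by
    rw [← sum_neg_distrib]
    exact sum_congr rfl fun i hi ↦ abs_of_neg (not_le.1 (mem_filter.1 hi).2)
  linarith [hc _ (filter_subset (fun i ↦ 0 ≤ x i) s)]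

section Empirical

variable {S : Type*} [DecidableEq S] [Fintype S]

lemma abs_sum_ite_eq_sub_le_one {p : S → ℝ} (hp₀ : ∀ s, 0 ≤ p s)
    (hp₁ : ∑ s, p s = 1) (y : S) (A : Finset S) :
    |∑ s ∈ A, ((if y = s then 1 else 0) - p s)| ≤ 1 := by
  have hA₀ : 0 ≤ ∑ s ∈ A, p s := sum_nonneg fun s _ ↦ hp₀ s
  have hA₁ : ∑ s ∈ A, p s ≤ 1 := hp₁ ▸ sum_le_univ_sum_of_nonneg hp₀
  rw [sum_sub_distrib, sum_ite_eq, abs_le]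
  split_ifs <;> constructor <;> linarith

lemma sum_abs_empirical_sub_le {N : ℕ} (y : ℕ → S) {t : ℕ → S → ℝ}
    (ht : ∀ i ∈ Icc 1 N, ∑ s, t i s = 1) {ε : ℝ} (hε : 0 ≤ ε)
    (h : ∀ A : Finset S,
      ∑ i ∈ Icc 1 N, ∑ s ∈ A, ((if y i = s then 1 else 0) - t i s) ≤ N * (ε / 2)) :
    ∑ s, |(1 / (N : ℝ)) * ∑ i ∈ Icc 1 N, (if y i = s then (1 : ℝ) else 0)
      - (1 / (N : ℝ)) * ∑ i ∈ Icc 1 N, t i s| ≤ ε := by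
  set x : S → ℝ := fun s ↦ ∑ i ∈ Icc 1 N, ((if y i = s then 1 else 0) - t i s)
  have hx : ∑ s, x s = 0 := by
    rw [sum_comm]
    exact sum_eq_zero fun i hi ↦ by rw [sum_sub_distrib, sum_ite_eq, ht i hi]; simp
  have hL1 : ∑ s, |x s| ≤ 2 * (N * (ε / 2)) :=
    sum_abs_le_two_mul_of_sum_eq_zero univ hx fun A _ ↦ sum_comm.trans_le (h A)
  calc _ = 1 / (N : ℝ) * ∑ s, |x s| := by
        rw [mul_sum]
        refine sum_congr rfl fun s _ ↦ ?_
        rw [← mul_sub, abs_mul, abs_of_nonneg (by positivity), ← sum_sub_distrib]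
    _ ≤ 1 / (N : ℝ) * (2 * (N * (ε / 2))) := by gcongr
    _ ≤ ε := by
        rcases N.eq_zero_or_pos with rfl | hN
        · simpa using hε
        · exact (by field_simp : 1 / (N : ℝ) * (2 * (N * (ε / 2))) = ε).le

end Empirical

section Martingale

variable {Ω : Type*} {m mΩ : MeasurableSpace Ω} {μ : Measure Ω}

lemma one_sub_le_measure_of_measure_compl_le [IsProbabilityMeasure μ] {s : Set Ω} {b : ℝ≥0∞}
    (h : μ sᶜ ≤ b) : 1 - b ≤ μ s :=
  tsub_le_iff_right.2 <| measure_univ (μ := μ) ▸ (measure_univ_le_add_compl s).trans (by gcongr)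

lemma integral_mul_exp_le_cosh_mul_integral [IsFiniteMeasure μ] (hm : m ≤ mΩ) {g D : Ω → ℝ}
    (hg : StronglyMeasurable[m] g) (hg_int : Integrable g μ) (hg_nonneg : 0 ≤ g)
    (hD : Measurable D) (hD_le : ∀ ω, |D ω| ≤ 1) (hD_mean : μ[D | m] =ᵐ[μ] 0) (l : ℝ) :
    ∫ ω, g ω * exp (l * D ω) ∂μ ≤ cosh l * ∫ ω, g ω ∂μ := by
  have hD_bound : ∀ᵐ ω ∂μ, ‖D ω‖ ≤ 1 := ae_of_all _ hD_le
  have hD_int : Integrable D μ := .of_bound hD.aestronglyMeasurable 1 hD_bound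
  have hgD_int : Integrable (fun ω ↦ g ω * D ω) μ :=
    hg_int.mul_bdd hD.aestronglyMeasurable hD_bound
  have hgD : ∫ ω, g ω * D ω ∂μ = 0 := by
    rw [← integral_condExp hm, ← integral_zero Ω ℝ]
    refine integral_congr_ae ?_
    filter_upwards [condExp_mul_of_stronglyMeasurable_left hg hgD_int hD_int, hD_mean]
      with ω h h'
    rw [Pi.mul_apply, h'] at h
    exact h.trans (mul_zero _)
  calc ∫ ω, g ω * exp (l * D ω) ∂μ ≤ ∫ ω, cosh l * g ω + sinh l * (g ω * D ω) ∂μ := by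
        refine integral_mono_of_nonneg (ae_of_all _ fun ω ↦ ?_)
          ((hg_int.const_mul _).add (hgD_int.const_mul _)) (ae_of_all _ fun ω ↦ ?_)
        · exact mul_nonneg (hg_nonneg ω) (exp_pos _).le
        · have := mul_le_mul_of_nonneg_left (exp_mul_le_cosh_add_mul_sinh l (hD_le ω))
            (hg_nonneg ω)
          dsimp only
          linarith
    _ = cosh l * ∫ ω, g ω ∂μ := by
        rw [integral_add (hg_int.const_mul _) (hgD_int.const_mul _), integral_const_mul,
          integral_const_mul, hgD, mul_zero, add_zero]

lemma integrable_exp_mul_sum [IsFiniteMeasure μ] {ι : Type*} {s : Finset ι} {D : ι → Ω → ℝ}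
    (hD : ∀ i ∈ s, Measurable (D i)) (hD_le : ∀ i ∈ s, ∀ ω, |D i ω| ≤ 1) (l : ℝ) :
    Integrable (fun ω ↦ exp (l * ∑ i ∈ s, D i ω)) μ := by
  refine integrable_exp_mul_of_mem_Icc (a := -#s) (b := #s)
    (Finset.measurable_sum _ hD).aemeasurable (ae_of_all _ fun ω ↦ abs_le.1 ?_)
  refine (abs_sum_le_sum_abs _ _).trans ?_
  simpa using sum_le_sum fun i hi ↦ hD_le i hi ω

lemma mgf_sum_Icc_le_cosh_pow [IsProbabilityMeasure μ] (ℱ : Filtration ℕ mΩ) {D : ℕ → Ω → ℝ}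
    {n : ℕ} (hD : ∀ i ∈ Icc 1 n, Measurable[ℱ i] (D i))
    (hD_le : ∀ i ∈ Icc 1 n, ∀ ω, |D i ω| ≤ 1)
    (hD_mean : ∀ i ∈ Icc 1 n, μ[D i | ℱ (i - 1)] =ᵐ[μ] 0) (l : ℝ) :
    mgf (fun ω ↦ ∑ i ∈ Icc 1 n, D i ω) μ l ≤ cosh l ^ n := by
  induction n with
  | zero => simp [mgf]
  | succ n ih =>
    have hsub : Icc 1 n ⊆ Icc 1 (n + 1) := Icc_subset_Icc_right n.le_succ
    have hn : n + 1 ∈ Icc 1 (n + 1) := right_mem_Icc.2 (by omega)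
    set S : Ω → ℝ := fun ω ↦ ∑ i ∈ Icc 1 n, D i ω
    have hS : Measurable[ℱ n] S := Finset.measurable_sum _ fun i hi ↦
      (hD i (hsub hi)).mono (ℱ.mono (mem_Icc.1 hi).2) le_rfl
    have hstep := integral_mul_exp_le_cosh_mul_integral (μ := μ) (ℱ.le n)
      (hS.const_mul l).exp.stronglyMeasurable
      (integrable_exp_mul_sum (fun i hi ↦ (hD i (hsub hi)).mono (ℱ.le i) le_rfl)
        (fun i hi ↦ hD_le i (hsub hi)) l)
      (fun ω ↦ (exp_pos _).le) ((hD _ hn).mono (ℱ.le _) le_rfl) (hD_le _ hn)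
      (by simpa using hD_mean _ hn) l
    calc mgf (fun ω ↦ ∑ i ∈ Icc 1 (n + 1), D i ω) μ l
        = ∫ ω, exp (l * S ω) * exp (l * D (n + 1) ω) ∂μ := by
          simp only [mgf, S, sum_Icc_succ_top (by omega : 1 ≤ n + 1), mul_add, exp_add]
      _ ≤ cosh l * mgf S μ l := hstep
      _ ≤ cosh l ^ (n + 1) := by
          rw [pow_succ']
          exact mul_le_mul_of_nonneg_left (ih (fun i hi ↦ hD i (hsub hi))
            (fun i hi ↦ hD_le i (hsub hi)) (fun i hi ↦ hD_mean i (hsub hi))) (cosh_pos l).le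

lemma measure_mul_le_sum_Icc_le_exp [IsProbabilityMeasure μ] (ℱ : Filtration ℕ mΩ) {D : ℕ → Ω → ℝ}
    {n : ℕ} (hD : ∀ i ∈ Icc 1 n, Measurable[ℱ i] (D i))
    (hD_le : ∀ i ∈ Icc 1 n, ∀ ω, |D i ω| ≤ 1)
    (hD_mean : ∀ i ∈ Icc 1 n, μ[D i | ℱ (i - 1)] =ᵐ[μ] 0) {c : ℝ} (hc : 0 ≤ c) :
    μ {ω | n * c ≤ ∑ i ∈ Icc 1 n, D i ω} ≤ ENNReal.ofReal (exp (-n * c ^ 2 / 2)) := by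
  rw [← ofReal_measureReal]
  refine ENNReal.ofReal_le_ofReal ?_
  calc μ.real {ω | n * c ≤ ∑ i ∈ Icc 1 n, D i ω}
      ≤ exp (-c * (n * c)) * mgf (fun ω ↦ ∑ i ∈ Icc 1 n, D i ω) μ c :=
        measure_ge_le_exp_mul_mgf _ hc (integrable_exp_mul_sum
          (fun i hi ↦ (hD i hi).mono (ℱ.le i) le_rfl) hD_le c)
    _ ≤ exp (-c * (n * c)) * exp (c ^ 2 / 2) ^ n := by
        gcongr
        exact (mgf_sum_Icc_le_cosh_pow ℱ hD hD_le hD_mean c).trans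
          (pow_le_pow_left₀ (cosh_pos c).le (cosh_le_exp_half_sq c) n)
    _ = exp (-n * c ^ 2 / 2) := by
        rw [← exp_nat_mul, ← exp_add]
        ring_nf

lemma condExp_sum_ite_eq_sub_eq_zero {S : Type*} [DecidableEq S] [MeasurableSpace S]
    [MeasurableSingletonClass S] [IsFiniteMeasure μ] (hm : m ≤ mΩ) {Y : Ω → S}
    {T : S → Ω → ℝ} (hY : Measurable Y)
    (hT : ∀ s, StronglyMeasurable[m] (T s))
    (hcond : ∀ s, μ[fun ω ↦ if Y ω = s then (1 : ℝ) else 0 | m] =ᵐ[μ] T s) (A : Finset S) :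
    μ[fun ω ↦ ∑ s ∈ A, ((if Y ω = s then 1 else 0) - T s ω) | m] =ᵐ[μ] 0 := by
  have hind (s : S) : Integrable (fun ω ↦ if Y ω = s then (1 : ℝ) else 0) μ :=
    .of_bound (Measurable.ite (hY (measurableSet_singleton s)) measurable_const
      measurable_const).aestronglyMeasurable 1 (ae_of_all _ fun ω ↦ by split_ifs <;> simp)
  have hT_int (s : S) : Integrable (T s) μ := integrable_condExp.congr (hcond s)
  have hzero (s : S) : μ[(fun ω ↦ if Y ω = s then 1 else 0) - T s | m] =ᵐ[μ] 0 := by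
    filter_upwards [condExp_sub (m := m) (hind s) (hT_int s), hcond s] with ω h h'
    rw [h, Pi.sub_apply, h', condExp_of_stronglyMeasurable hm (hT s) (hT_int s), sub_self,
      Pi.zero_apply]
  have hfun : (fun ω ↦ ∑ s ∈ A, ((if Y ω = s then 1 else 0) - T s ω)) =
      ∑ s ∈ A, ((fun ω ↦ if Y ω = s then (1 : ℝ) else 0) - T s) := by
    ext ω
    simp [Finset.sum_apply]
  rw [hfun]
  filter_upwards [condExp_finsetSum (fun s _ ↦ (hind s).sub (hT_int s)) m,
    (Filter.eventually_all_finset A).2 fun s _ ↦ hzero s] with ω h h'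
  rw [h, Finset.sum_apply]
  exact sum_eq_zero h'

end Martingale

theorem stmt3_general {Ω : Type*} {mΩ : MeasurableSpace Ω} (μ : Measure Ω) [IsProbabilityMeasure μ]
    {Sb : Type*} [Fintype Sb] [DecidableEq Sb]
    [MeasurableSpace Sb] [MeasurableSingletonClass Sb]
    -- a filtration (𝓕_i) on Ω
    (ℱ : Filtration ℕ mΩ)
    -- Sb-valued random variables Y 1, ..., Y N, with Y i measurable w.r.t. 𝓕_i
    (N : ℕ) (Y : ℕ → Ω → Sb)
    (hYmeas : ∀ i ∈ Finset.Icc 1 N, Measurable[ℱ i] (Y i))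
    -- the 𝓕_{i−1}-measurable random probability vectors T i
    (T : ℕ → Sb → Ω → ℝ)
    (hTmeas : ∀ i ∈ Finset.Icc 1 N, ∀ sb, StronglyMeasurable[ℱ (i - 1)] (T i sb))
    (hT0 : ∀ i ∈ Finset.Icc 1 N, ∀ sb ω, 0 ≤ T i sb ω)
    (hT1 : ∀ i ∈ Finset.Icc 1 N, ∀ ω, ∑ sb, T i sb ω = 1)
    -- P(Y i = sb | 𝓕_{i−1}) = T i sb almost surely
    (hcond : ∀ i ∈ Finset.Icc 1 N, ∀ sb,
      μ[(fun ω => if Y i ω = sb then (1 : ℝ) else 0) | ℱ (i - 1)] =ᵐ[μ] T i sb)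
    (ε : ℝ) (hε : 0 < ε) :
    -- with probability at least 1 − 2^|Sb|·exp(−N·ε²/8), ‖P_Y − P_T‖₁ ≤ ε
    1 - ENNReal.ofReal ((2 : ℝ) ^ (Fintype.card Sb) * Real.exp (-(N : ℝ) * ε ^ 2 / 8))
      ≤ μ {ω | ∑ sb : Sb,
          |(1 / (N : ℝ)) * ∑ i ∈ Finset.Icc 1 N, (if Y i ω = sb then (1 : ℝ) else 0)
            - (1 / (N : ℝ)) * ∑ i ∈ Finset.Icc 1 N, T i sb ω| ≤ ε} := by
  set D : Finset Sb → ℕ → Ω → ℝ :=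
    fun A i ω ↦ ∑ s ∈ A, ((if Y i ω = s then 1 else 0) - T i s ω)
  have hD (A : Finset Sb) : ∀ i ∈ Icc 1 N, Measurable[ℱ i] (D A i) := fun i hi ↦
    Finset.measurable_sum _ fun s _ ↦
      (Measurable.ite (hYmeas i hi (measurableSet_singleton s)) measurable_const
        measurable_const).sub ((hTmeas i hi s).measurable.mono (ℱ.mono (Nat.sub_le i 1)) le_rfl)
  have htail (A : Finset Sb) : μ {ω | N * (ε / 2) ≤ ∑ i ∈ Icc 1 N, D A i ω}
      ≤ ENNReal.ofReal (exp (-N * ε ^ 2 / 8)) := by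
    convert measure_mul_le_sum_Icc_le_exp ℱ (hD A)
      (fun i hi ω ↦ abs_sum_ite_eq_sub_le_one (hT0 i hi · ω) (hT1 i hi ω) _ A)
      (fun i hi ↦ condExp_sum_ite_eq_sub_eq_zero (ℱ.le _)
        ((hYmeas i hi).mono (ℱ.le i) le_rfl) (hTmeas i hi) (hcond i hi) A)
      (by positivity : 0 ≤ ε / 2) using 3
    ring
  refine one_sub_le_measure_of_measure_compl_le ?_
  calc _ ≤ μ (⋃ A : Finset Sb, {ω | N * (ε / 2) ≤ ∑ i ∈ Icc 1 N, D A i ω}) := by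
        refine measure_mono fun ω hω ↦ Set.mem_iUnion.2 <| not_forall_not.1 fun hA ↦ hω ?_
        exact sum_abs_empirical_sub_le (Y · ω) (fun i hi ↦ hT1 i hi ω) hε.le
          fun A ↦ le_of_not_ge (hA A)
    _ ≤ ∑ A : Finset Sb, μ {ω | N * (ε / 2) ≤ ∑ i ∈ Icc 1 N, D A i ω} :=
        measure_iUnion_fintype_le _ _
    _ ≤ ∑ _A : Finset Sb, ENNReal.ofReal (exp (-N * ε ^ 2 / 8)) := sum_le_sum fun A _ ↦ htail A
    _ = _ := by
        simp [Fintype.card_finset, ENNReal.ofReal_mul, ENNReal.ofReal_pow]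

theorem stmt3 {Ω : Type*} {mΩ : MeasurableSpace Ω} (μ : Measure Ω) [IsProbabilityMeasure μ]
    {Sb : Type*} [Fintype Sb] [Nonempty Sb] [DecidableEq Sb]
    [MeasurableSpace Sb] [MeasurableSingletonClass Sb]
    -- a filtration (𝓕_i) on Ω
    (ℱ : Filtration ℕ mΩ)
    -- Sb-valued random variables Y 1, ..., Y N, with Y i measurable w.r.t. 𝓕_i
    (N : ℕ) (Y : ℕ → Ω → Sb)
    (hYmeas : ∀ i ∈ Finset.Icc 1 N, Measurable[ℱ i] (Y i))
    -- the 𝓕_{i−1}-measurable random probability vectors T i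
    (T : ℕ → Sb → Ω → ℝ)
    (hTmeas : ∀ i ∈ Finset.Icc 1 N, ∀ sb, StronglyMeasurable[ℱ (i - 1)] (T i sb))
    (hT0 : ∀ i ∈ Finset.Icc 1 N, ∀ sb ω, 0 ≤ T i sb ω)
    (hT1 : ∀ i ∈ Finset.Icc 1 N, ∀ ω, ∑ sb, T i sb ω = 1)
    -- P(Y i = sb | 𝓕_{i−1}) = T i sb almost surely
    (hcond : ∀ i ∈ Finset.Icc 1 N, ∀ sb,
      μ[(fun ω => if Y i ω = sb then (1 : ℝ) else 0) | ℱ (i - 1)] =ᵐ[μ] T i sb)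
    (ε : ℝ) (hε : 0 < ε) :
    -- with probability at least 1 − 2^|Sb|·exp(−N·ε²/8), ‖P_Y − P_T‖₁ ≤ ε
    1 - ENNReal.ofReal ((2 : ℝ) ^ (Fintype.card Sb) * Real.exp (-(N : ℝ) * ε ^ 2 / 8))
      ≤ μ {ω | ∑ sb : Sb,
          |(1 / (N : ℝ)) * ∑ i ∈ Finset.Icc 1 N, (if Y i ω = sb then (1 : ℝ) else 0)
            - (1 / (N : ℝ)) * ∑ i ∈ Finset.Icc 1 N, T i sb ω| ≤ ε} :=
  stmt3_general μ ℱ N Y hYmeas T hTmeas hT0 hT1 hcond ε hε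
end

section
/- Let M = (S, A, T, R) be a finite MDP with rewards in [0, Rmax], let φ : S → S̄ be a state abstraction, and let M̄ = (S̄, A, T̄, R̄) be an abstract MDP such that for all s̄, s̄' ∈ S̄, all s ∈ S with φ(s) = s̄, and all a ∈ A: |T̄(s̄'|s̄,a) − Σ_{s'∈φ⁻¹(s̄')} T(s'|s,a)| ≤ η_T and |R̄(s̄,a) − R(s,a)| ≤ η_R. Fix a discount γ ∈ [0,1). Then for every abstract policy π̄ : S̄ → A and every s ∈ S: |V^{π̄∘φ}_M(s) − V̄^{π̄}_{M̄}(φ(s))| ≤ η_R/(1−γ) + γ·η_T·|S̄|·Rmax/(1−γ)², where V^{π̄∘φ}_M is the γ-discounted value in M of the policy s ↦ π̄(φ(s)) and V̄^{π̄}_{M̄} is the γ-discounted value of π̄ in M̄. -/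
theorem stmt5 {S Sb A : Type*} [Fintype S] [Fintype Sb] [Fintype A]
    [Nonempty S] [Nonempty Sb] [Nonempty A] [DecidableEq Sb]
    -- the ground MDP M = (S, A, T, R), rewards in [0, Rmax]
    (T : S → A → S → ℝ) (R : S → A → ℝ) (Rmax : ℝ) (hRmax : 0 < Rmax)
    (hT0 : ∀ s a s', 0 ≤ T s a s') (hT1 : ∀ s a, ∑ s', T s a s' = 1)
    (hR0 : ∀ s a, 0 ≤ R s a) (hR1 : ∀ s a, R s a ≤ Rmax)
    -- the state abstraction φ : S → Sb
    (φ : S → Sb) (hφ : Function.Surjective φ)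
    -- the abstract MDP M̄ = (Sb, A, Tb, Rb)
    (Tb : Sb → A → Sb → ℝ) (Rb : Sb → A → ℝ)
    (hTb0 : ∀ sb a sb', 0 ≤ Tb sb a sb') (hTb1 : ∀ sb a, ∑ sb', Tb sb a sb' = 1)
    (hRb0 : ∀ sb a, 0 ≤ Rb sb a) (hRb1 : ∀ sb a, Rb sb a ≤ Rmax)
    -- approximate model similarity between M and M̄
    (ηT ηR : ℝ)
    (hsimT : ∀ s a sb', |Tb (φ s) a sb' -
      ∑ s' ∈ Finset.univ.filter (fun s' => φ s' = sb'), T s a s'| ≤ ηT)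
    (hsimR : ∀ s a, |Rb (φ s) a - R s a| ≤ ηR)
    -- the discount factor
    (γ : ℝ) (hγ0 : 0 ≤ γ) (hγ1 : γ < 1)
    -- any abstract policy πb, its γ-discounted value Vb in M̄,
    -- and the γ-discounted value V of the induced policy πb ∘ φ in M
    (πb : Sb → A)
    (Vb : Sb → ℝ)
    (hVb : ∀ sb, Vb sb = Rb sb (πb sb) + γ * ∑ sb', Tb sb (πb sb) sb' * Vb sb')
    (V : S → ℝ)
    (hV : ∀ s, V s = R s (πb (φ s)) + γ * ∑ s', T s (πb (φ s)) s' * V s')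
    (s : S) :
    |V s - Vb (φ s)| ≤ ηR / (1 - γ) +
      γ * ηT * (Fintype.card Sb : ℝ) * Rmax / (1 - γ) ^ 2 := by
  have h1γ : 0 < 1 - γ := by linarith
  -- bound on |Vb|
  obtain ⟨sb0, -, hsb0⟩ := Finset.exists_mem_eq_sup' (Finset.univ_nonempty)
    (fun sb => |Vb sb|)
  have hCle : ∀ sb, |Vb sb| ≤ |Vb sb0| := fun sb => by
    rw [← hsb0]; exact Finset.le_sup' (fun sb => |Vb sb|) (Finset.mem_univ sb)
  have hCstep : ∀ sb, |Vb sb| ≤ Rmax + γ * |Vb sb0| := by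
    intro sb
    rw [hVb sb]
    calc |Rb sb (πb sb) + γ * ∑ sb', Tb sb (πb sb) sb' * Vb sb'|
        ≤ |Rb sb (πb sb)| + |γ * ∑ sb', Tb sb (πb sb) sb' * Vb sb'| :=
          abs_add_le _ _
      _ ≤ Rmax + γ * |Vb sb0| := by
          gcongr ?_ + ?_
          · rw [abs_of_nonneg (hRb0 _ _)]; exact hRb1 _ _
          · rw [abs_mul, abs_of_nonneg hγ0]
            refine mul_le_mul_of_nonneg_left ?_ hγ0
            calc |∑ sb', Tb sb (πb sb) sb' * Vb sb'|
                ≤ ∑ sb', |Tb sb (πb sb) sb' * Vb sb'| := Finset.abs_sum_le_sum_abs _ _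
              _ ≤ ∑ sb', Tb sb (πb sb) sb' * |Vb sb0| := by
                  apply Finset.sum_le_sum
                  intro i _
                  rw [abs_mul, abs_of_nonneg (hTb0 _ _ _)]
                  exact mul_le_mul_of_nonneg_left (hCle i) (hTb0 _ _ _)
              _ = |Vb sb0| := by rw [← Finset.sum_mul, hTb1, one_mul]
  have hVbbound : ∀ sb, |Vb sb| ≤ Rmax / (1 - γ) := by
    have h0 : |Vb sb0| ≤ Rmax / (1 - γ) := by
      have := hCstep sb0
      rw [le_div_iff₀ h1γ]; nlinarith
    exact fun sb => le_trans (hCle sb) h0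
  have hηT : 0 ≤ ηT := le_trans (abs_nonneg _) (hsimT s (πb (φ s)) (φ s))
  -- D = max |V - Vb ∘ φ|
  obtain ⟨t0, -, ht0⟩ := Finset.exists_mem_eq_sup' (Finset.univ_nonempty)
    (fun s => |V s - Vb (φ s)|)
  have hDle : ∀ s, |V s - Vb (φ s)| ≤ |V t0 - Vb (φ t0)| := fun s => by
    rw [← ht0]; exact Finset.le_sup' (fun s => |V s - Vb (φ s)|) (Finset.mem_univ s)
  set D : ℝ := |V t0 - Vb (φ t0)| with hD
  have key : ∀ t : S, |V t - Vb (φ t)| ≤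
      ηR + γ * (ηT * (Fintype.card Sb : ℝ) * (Rmax / (1 - γ)) + D) := by
    intro t
    set a := πb (φ t) with ha
    have hsplit : V t - Vb (φ t) = (R t a - Rb (φ t) a)
        + γ * (∑ s', T t a s' * (V s' - Vb (φ s')))
        + γ * (∑ sb', ((∑ s' ∈ Finset.univ.filter (fun s' => φ s' = sb'), T t a s')
            - Tb (φ t) a sb') * Vb sb') := by
      have hfib : ∑ s', T t a s' * Vb (φ s')
          = ∑ sb', ∑ s' ∈ Finset.univ.filter (fun s' => φ s' = sb'),
              T t a s' * Vb (φ s') := by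
        rw [Finset.sum_fiberwise_eq_sum_filter]
        simp
      have hfib2 : ∑ s', T t a s' * Vb (φ s')
          = ∑ sb', (∑ s' ∈ Finset.univ.filter (fun s' => φ s' = sb'), T t a s')
              * Vb sb' := by
        rw [hfib]
        apply Finset.sum_congr rfl
        intro sb' _
        rw [Finset.sum_mul]
        apply Finset.sum_congr rfl
        intro x hx
        rw [Finset.mem_filter] at hx
        rw [hx.2]
      have hVsplit : ∑ s', T t a s' * V s'
          = (∑ s', T t a s' * (V s' - Vb (φ s'))) + ∑ s', T t a s' * Vb (φ s') := by
        rw [← Finset.sum_add_distrib]; apply Finset.sum_congr rfl; intro x _; ring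
      have hsub : ∑ sb', ((∑ s' ∈ Finset.univ.filter (fun s' => φ s' = sb'), T t a s')
            - Tb (φ t) a sb') * Vb sb'
          = (∑ sb', (∑ s' ∈ Finset.univ.filter (fun s' => φ s' = sb'), T t a s')
              * Vb sb') - ∑ sb', Tb (φ t) a sb' * Vb sb' := by
        rw [← Finset.sum_sub_distrib]
        apply Finset.sum_congr rfl; intro x _; ring
      rw [hV t, hVb (φ t), ← ha, hVsplit, hfib2, hsub]
      ring
    rw [hsplit]
    have b1 : |R t a - Rb (φ t) a| ≤ ηR := by
      rw [abs_sub_comm]; exact hsimR t a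
    have b2 : |∑ s', T t a s' * (V s' - Vb (φ s'))| ≤ D := by
      calc |∑ s', T t a s' * (V s' - Vb (φ s'))|
          ≤ ∑ s', |T t a s' * (V s' - Vb (φ s'))| := Finset.abs_sum_le_sum_abs _ _
        _ ≤ ∑ s', T t a s' * D := by
            apply Finset.sum_le_sum
            intro i _
            rw [abs_mul, abs_of_nonneg (hT0 _ _ _)]
            exact mul_le_mul_of_nonneg_left (hDle i) (hT0 _ _ _)
        _ = D := by rw [← Finset.sum_mul, hT1, one_mul]
    have b3 : |∑ sb', ((∑ s' ∈ Finset.univ.filter (fun s' => φ s' = sb'), T t a s')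
            - Tb (φ t) a sb') * Vb sb'|
        ≤ ηT * (Fintype.card Sb : ℝ) * (Rmax / (1 - γ)) := by
      calc |∑ sb', ((∑ s' ∈ Finset.univ.filter (fun s' => φ s' = sb'), T t a s')
            - Tb (φ t) a sb') * Vb sb'|
          ≤ ∑ sb', |((∑ s' ∈ Finset.univ.filter (fun s' => φ s' = sb'), T t a s')
            - Tb (φ t) a sb') * Vb sb'| := Finset.abs_sum_le_sum_abs _ _
        _ ≤ ∑ sb' : Sb, ηT * (Rmax / (1 - γ)) := by
            apply Finset.sum_le_sum
            intro sb' _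
            rw [abs_mul]
            apply mul_le_mul _ (hVbbound sb') (abs_nonneg _) hηT
            rw [abs_sub_comm]
            exact hsimT t a sb'
        _ = ηT * (Fintype.card Sb : ℝ) * (Rmax / (1 - γ)) := by
            rw [Finset.sum_const, Finset.card_univ, nsmul_eq_mul]; ring
    calc |(R t a - Rb (φ t) a)
        + γ * (∑ s', T t a s' * (V s' - Vb (φ s')))
        + γ * (∑ sb', ((∑ s' ∈ Finset.univ.filter (fun s' => φ s' = sb'), T t a s')
            - Tb (φ t) a sb') * Vb sb')|
        ≤ |R t a - Rb (φ t) a|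
          + γ * |∑ s', T t a s' * (V s' - Vb (φ s'))|
          + γ * |∑ sb', ((∑ s' ∈ Finset.univ.filter (fun s' => φ s' = sb'), T t a s')
            - Tb (φ t) a sb') * Vb sb'| := by
          refine le_trans (abs_add_le _ _) ?_
          gcongr ?_ + ?_
          · refine le_trans (abs_add_le _ _) ?_
            gcongr
            rw [abs_mul, abs_of_nonneg hγ0]
          · rw [abs_mul, abs_of_nonneg hγ0]
      _ ≤ ηR + γ * (ηT * (Fintype.card Sb : ℝ) * (Rmax / (1 - γ)) + D) := by
          have h2 := mul_le_mul_of_nonneg_left b2 hγ0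
          have h3 := mul_le_mul_of_nonneg_left b3 hγ0
          linarith
  have hDbound : D ≤ ηR + γ * (ηT * (Fintype.card Sb : ℝ) * (Rmax / (1 - γ)) + D) :=
    key t0
  have hK : D * (1 - γ) ≤ ηR + γ * (ηT * (Fintype.card Sb : ℝ) * (Rmax / (1 - γ))) := by
    nlinarith [hDbound]
  have hfinal : D ≤ ηR / (1 - γ) +
      γ * ηT * (Fintype.card Sb : ℝ) * Rmax / (1 - γ) ^ 2 := by
    have h1 : D ≤ (ηR + γ * (ηT * (Fintype.card Sb : ℝ) * (Rmax / (1 - γ)))) / (1 - γ) := by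
      rw [le_div_iff₀ h1γ]; exact hK
    have h2 : (ηR + γ * (ηT * (Fintype.card Sb : ℝ) * (Rmax / (1 - γ)))) / (1 - γ)
        = ηR / (1 - γ) + γ * ηT * (Fintype.card Sb : ℝ) * Rmax / (1 - γ) ^ 2 := by
      field_simp
    linarith [h1, h2.le, h2.ge]
  exact le_trans (hDle s) hfinal
end

section
/- Let M = (S, A, T, R) be a finite MDP with rewards in [0, Rmax], let φ : S → S̄ be a state abstraction, and let M̄ = (S̄, A, T̄, R̄) be an abstract MDP such that for all s̄, s̄' ∈ S̄, all s ∈ S with φ(s) = s̄, and all a ∈ A: |T̄(s̄'|s̄,a) − Σ_{s'∈φ⁻¹(s̄')} T(s'|s,a)| ≤ η_T and |R̄(s̄,a) − R(s,a)| ≤ η_R. Fix a discount γ ∈ [0,1). Then for every s ∈ S: |V^*_M(s) − V̄^*_{M̄}(φ(s))| ≤ η_R/(1−γ) + γ·η_T·|S̄|·Rmax/(1−γ)², where V^*_M and V̄^*_{M̄} are the γ-discounted optimal values of M and M̄ respectively. -/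
theorem stmt7 {S Sb A : Type*} [Fintype S] [Fintype Sb] [Fintype A]
    [Nonempty S] [Nonempty Sb] [Nonempty A] [DecidableEq Sb]
    -- the ground MDP M = (S, A, T, R), rewards in [0, Rmax]
    (T : S → A → S → ℝ) (R : S → A → ℝ) (Rmax : ℝ) (hRmax : 0 < Rmax)
    (hT0 : ∀ s a s', 0 ≤ T s a s') (hT1 : ∀ s a, ∑ s', T s a s' = 1)
    (hR0 : ∀ s a, 0 ≤ R s a) (hR1 : ∀ s a, R s a ≤ Rmax)
    -- the state abstraction φ : S → Sb
    (φ : S → Sb) (hφ : Function.Surjective φ)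
    -- the abstract MDP M̄ = (Sb, A, Tb, Rb)
    (Tb : Sb → A → Sb → ℝ) (Rb : Sb → A → ℝ)
    (hTb0 : ∀ sb a sb', 0 ≤ Tb sb a sb') (hTb1 : ∀ sb a, ∑ sb', Tb sb a sb' = 1)
    (hRb0 : ∀ sb a, 0 ≤ Rb sb a) (hRb1 : ∀ sb a, Rb sb a ≤ Rmax)
    -- approximate model similarity between M and M̄
    (ηT ηR : ℝ)
    (hsimT : ∀ s a sb', |Tb (φ s) a sb' -
      ∑ s' ∈ Finset.univ.filter (fun s' => φ s' = sb'), T s a s'| ≤ ηT)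
    (hsimR : ∀ s a, |Rb (φ s) a - R s a| ≤ ηR)
    -- the discount factor
    (γ : ℝ) (hγ0 : 0 ≤ γ) (hγ1 : γ < 1)
    -- the γ-discounted optimal value Vs of M
    (Vs : S → ℝ)
    (hVs : ∀ s, Vs s = Finset.univ.sup' Finset.univ_nonempty
      (fun a => R s a + γ * ∑ s', T s a s' * Vs s'))
    -- the γ-discounted optimal value Vbs of M̄
    (Vbs : Sb → ℝ)
    (hVbs : ∀ sb, Vbs sb = Finset.univ.sup' Finset.univ_nonempty
      (fun a => Rb sb a + γ * ∑ sb', Tb sb a sb' * Vbs sb'))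
    (s : S) :
    |Vs s - Vbs (φ s)| ≤ ηR / (1 - γ) +
      γ * ηT * (Fintype.card Sb : ℝ) * Rmax / (1 - γ) ^ 2 := by
  have h1γ : (0:ℝ) < 1 - γ := by linarith
  set B := Rmax / (1 - γ) with hB
  -- upper bound on Vbs
  have hVub : ∀ sb, Vbs sb ≤ B := by
    obtain ⟨sb0, -, hsb0⟩ := Finset.exists_mem_eq_sup' (Finset.univ_nonempty (α := Sb)) Vbs
    have hle : ∀ sb, Vbs sb ≤ Vbs sb0 := fun sb => by
      rw [← hsb0]; exact Finset.le_sup' Vbs (Finset.mem_univ sb)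
    have hkey : Vbs sb0 ≤ Rmax + γ * Vbs sb0 := by
      conv_lhs => rw [hVbs sb0]
      apply Finset.sup'_le
      intro a _
      have h1 : ∑ sb', Tb sb0 a sb' * Vbs sb' ≤ ∑ sb', Tb sb0 a sb' * Vbs sb0 :=
        Finset.sum_le_sum fun sb' _ => mul_le_mul_of_nonneg_left (hle sb') (hTb0 _ _ _)
      have h2 : ∑ sb', Tb sb0 a sb' * Vbs sb0 = Vbs sb0 := by
        rw [← Finset.sum_mul, hTb1, one_mul]
      have := hRb1 sb0 a
      nlinarith
    have : Vbs sb0 ≤ B := by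
      rw [hB, le_div_iff₀ h1γ]; nlinarith
    exact fun sb => le_trans (hle sb) this
  -- lower bound on Vbs
  have hVlb : ∀ sb, 0 ≤ Vbs sb := by
    obtain ⟨sb0, -, hsb0⟩ := Finset.exists_mem_eq_inf' (Finset.univ_nonempty (α := Sb)) Vbs
    have hge : ∀ sb, Vbs sb0 ≤ Vbs sb := fun sb => by
      rw [← hsb0]; exact Finset.inf'_le Vbs (Finset.mem_univ sb)
    obtain ⟨a0⟩ := ‹Nonempty A›
    have hkey : Rb sb0 a0 + γ * ∑ sb', Tb sb0 a0 sb' * Vbs sb' ≤ Vbs sb0 := by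
      conv_rhs => rw [hVbs sb0]
      exact Finset.le_sup' (fun a => Rb sb0 a + γ * ∑ sb', Tb sb0 a sb' * Vbs sb')
        (Finset.mem_univ a0)
    have h1 : ∑ sb', Tb sb0 a0 sb' * Vbs sb0 ≤ ∑ sb', Tb sb0 a0 sb' * Vbs sb' :=
      Finset.sum_le_sum fun sb' _ => mul_le_mul_of_nonneg_left (hge sb') (hTb0 _ _ _)
    have h2 : ∑ sb', Tb sb0 a0 sb' * Vbs sb0 = Vbs sb0 := by
      rw [← Finset.sum_mul, hTb1, one_mul]
    have hR0' := hRb0 sb0 a0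
    have : 0 ≤ Vbs sb0 := by nlinarith
    exact fun sb => le_trans this (hge sb)
  have hVabs : ∀ sb, |Vbs sb| ≤ B := fun sb => by
    rw [abs_le]; exact ⟨by linarith [hVlb sb, div_nonneg hRmax.le h1γ.le], hVub sb⟩
  have hBnn : 0 ≤ B := div_nonneg hRmax.le h1γ.le
  -- eta nonnegative
  obtain ⟨a0⟩ := ‹Nonempty A›
  obtain ⟨s0⟩ := ‹Nonempty S›
  have hηT : 0 ≤ ηT := le_trans (abs_nonneg _) (hsimT s0 a0 (φ s0))
  have hηR : 0 ≤ ηR := le_trans (abs_nonneg _) (hsimR s0 a0)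
  -- the sup of the gap
  set Δ := Finset.univ.sup' (Finset.univ_nonempty (α := S))
      (fun s => |Vs s - Vbs (φ s)|) with hΔ
  have hΔle : ∀ s, |Vs s - Vbs (φ s)| ≤ Δ := fun s => by
    rw [hΔ]; exact Finset.le_sup' (fun s => |Vs s - Vbs (φ s)|) (Finset.mem_univ s)
  -- pointwise bound (per state, per action)
  have key : ∀ t : S, |Vs t - Vbs (φ t)| ≤ ηR + γ * Δ + γ * (ηT * (Fintype.card Sb : ℝ) * B) := by
    intro t
    rw [hVs t, hVbs (φ t)]
    rw [abs_sub_le_iff]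
    constructor
    · rw [sub_le_iff_le_add]
      apply Finset.sup'_le
      intro a _
      have hb : Rb (φ t) a + γ * ∑ sb', Tb (φ t) a sb' * Vbs sb' ≤
          Finset.univ.sup' Finset.univ_nonempty
            (fun a => Rb (φ t) a + γ * ∑ sb', Tb (φ t) a sb' * Vbs sb') :=
        Finset.le_sup' (fun a => Rb (φ t) a + γ * ∑ sb', Tb (φ t) a sb' * Vbs sb')
          (Finset.mem_univ a)
      have hdiff : (R t a + γ * ∑ s', T t a s' * Vs s') -
          (Rb (φ t) a + γ * ∑ sb', Tb (φ t) a sb' * Vbs sb') ≤ ηR + γ * Δ + γ * (ηT * (Fintype.card Sb : ℝ) * B) := by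
        -- decompose
        have hsplit : ∑ s', T t a s' * Vs s' - ∑ sb', Tb (φ t) a sb' * Vbs sb' =
            (∑ s', T t a s' * (Vs s' - Vbs (φ s'))) +
            ∑ sb', ((∑ s' ∈ Finset.univ.filter (fun s' => φ s' = sb'), T t a s')
              - Tb (φ t) a sb') * Vbs sb' := by
          have hfib : ∑ sb', (∑ s' ∈ Finset.univ.filter (fun s' => φ s' = sb'),
              T t a s') * Vbs sb' = ∑ s', T t a s' * Vbs (φ s') := by
            rw [← Finset.sum_fiberwise Finset.univ φ (fun s' => T t a s' * Vbs (φ s'))]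
            refine Finset.sum_congr rfl fun sb' _ => ?_
            rw [Finset.sum_mul]
            refine Finset.sum_congr rfl fun s' hs' => ?_
            rw [(Finset.mem_filter.mp hs').2]
          simp only [sub_mul, Finset.sum_sub_distrib, hfib, mul_sub, Finset.sum_sub_distrib]
          ring
        have h1 : ∑ s', T t a s' * (Vs s' - Vbs (φ s')) ≤ Δ := by
          calc ∑ s', T t a s' * (Vs s' - Vbs (φ s'))
              ≤ ∑ s', T t a s' * Δ := Finset.sum_le_sum fun s' _ =>
                mul_le_mul_of_nonneg_left
                  (le_trans (le_abs_self _) (hΔle s')) (hT0 _ _ _)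
            _ = Δ := by rw [← Finset.sum_mul, hT1, one_mul]
        have h2 : ∑ sb', ((∑ s' ∈ Finset.univ.filter (fun s' => φ s' = sb'), T t a s')
            - Tb (φ t) a sb') * Vbs sb' ≤ ηT * (Fintype.card Sb : ℝ) * B := by
          calc ∑ sb', ((∑ s' ∈ Finset.univ.filter (fun s' => φ s' = sb'), T t a s')
                - Tb (φ t) a sb') * Vbs sb'
              ≤ ∑ sb', ηT * B := Finset.sum_le_sum fun sb' _ => by
                have ha : |(∑ s' ∈ Finset.univ.filter (fun s' => φ s' = sb'), T t a s')
                    - Tb (φ t) a sb'| ≤ ηT := by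
                  rw [abs_sub_comm]; exact hsimT t a sb'
                calc ((∑ s' ∈ Finset.univ.filter (fun s' => φ s' = sb'), T t a s')
                      - Tb (φ t) a sb') * Vbs sb'
                    ≤ |((∑ s' ∈ Finset.univ.filter (fun s' => φ s' = sb'), T t a s')
                      - Tb (φ t) a sb') * Vbs sb'| := le_abs_self _
                  _ = |(∑ s' ∈ Finset.univ.filter (fun s' => φ s' = sb'), T t a s')
                      - Tb (φ t) a sb'| * |Vbs sb'| := abs_mul _ _
                  _ ≤ ηT * B := mul_le_mul ha (hVabs sb') (abs_nonneg _) hηT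
            _ = ηT * (Fintype.card Sb : ℝ) * B := by
                rw [Finset.sum_const, Finset.card_univ, nsmul_eq_mul]; ring
        have hRd : R t a - Rb (φ t) a ≤ ηR := by
          have := hsimR t a
          rw [abs_sub_comm, abs_le] at this
          linarith [this.2]
        have := mul_le_mul_of_nonneg_left (by linarith :
          ∑ s', T t a s' * Vs s' - ∑ sb', Tb (φ t) a sb' * Vbs sb'
            ≤ Δ + ηT * (Fintype.card Sb : ℝ) * B) hγ0
        nlinarith
      linarith
    · rw [sub_le_iff_le_add]
      apply Finset.sup'_le
      intro a _
      have hb : R t a + γ * ∑ s', T t a s' * Vs s' ≤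
          Finset.univ.sup' Finset.univ_nonempty
            (fun a => R t a + γ * ∑ s', T t a s' * Vs s') :=
        Finset.le_sup' (fun a => R t a + γ * ∑ s', T t a s' * Vs s')
          (Finset.mem_univ a)
      have hdiff : (Rb (φ t) a + γ * ∑ sb', Tb (φ t) a sb' * Vbs sb') -
          (R t a + γ * ∑ s', T t a s' * Vs s') ≤ ηR + γ * Δ + γ * (ηT * (Fintype.card Sb : ℝ) * B) := by
        have hsplit : ∑ sb', Tb (φ t) a sb' * Vbs sb' - ∑ s', T t a s' * Vs s' =
            (∑ s', T t a s' * (Vbs (φ s') - Vs s')) +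
            ∑ sb', (Tb (φ t) a sb'
              - ∑ s' ∈ Finset.univ.filter (fun s' => φ s' = sb'), T t a s') * Vbs sb' := by
          have hfib : ∑ sb', (∑ s' ∈ Finset.univ.filter (fun s' => φ s' = sb'),
              T t a s') * Vbs sb' = ∑ s', T t a s' * Vbs (φ s') := by
            rw [← Finset.sum_fiberwise Finset.univ φ (fun s' => T t a s' * Vbs (φ s'))]
            refine Finset.sum_congr rfl fun sb' _ => ?_
            rw [Finset.sum_mul]
            refine Finset.sum_congr rfl fun s' hs' => ?_
            rw [(Finset.mem_filter.mp hs').2]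
          simp only [sub_mul, Finset.sum_sub_distrib, hfib, mul_sub, Finset.sum_sub_distrib]
          ring
        have h1 : ∑ s', T t a s' * (Vbs (φ s') - Vs s') ≤ Δ := by
          calc ∑ s', T t a s' * (Vbs (φ s') - Vs s')
              ≤ ∑ s', T t a s' * Δ := Finset.sum_le_sum fun s' _ =>
                mul_le_mul_of_nonneg_left
                  (le_trans (by rw [← neg_sub]; exact neg_le_abs _) (hΔle s'))
                  (hT0 _ _ _)
            _ = Δ := by rw [← Finset.sum_mul, hT1, one_mul]
        have h2 : ∑ sb', (Tb (φ t) a sb'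
            - ∑ s' ∈ Finset.univ.filter (fun s' => φ s' = sb'), T t a s') * Vbs sb'
            ≤ ηT * (Fintype.card Sb : ℝ) * B := by
          calc ∑ sb', (Tb (φ t) a sb'
                - ∑ s' ∈ Finset.univ.filter (fun s' => φ s' = sb'), T t a s') * Vbs sb'
              ≤ ∑ sb', ηT * B := Finset.sum_le_sum fun sb' _ => by
                calc (Tb (φ t) a sb'
                      - ∑ s' ∈ Finset.univ.filter (fun s' => φ s' = sb'), T t a s') * Vbs sb'
                    ≤ |(Tb (φ t) a sb'
                      - ∑ s' ∈ Finset.univ.filter (fun s' => φ s' = sb'), T t a s') * Vbs sb'| :=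
                      le_abs_self _
                  _ = |Tb (φ t) a sb'
                      - ∑ s' ∈ Finset.univ.filter (fun s' => φ s' = sb'), T t a s'| * |Vbs sb'| :=
                      abs_mul _ _
                  _ ≤ ηT * B := mul_le_mul (hsimT t a sb') (hVabs sb') (abs_nonneg _) hηT
            _ = ηT * (Fintype.card Sb : ℝ) * B := by
                rw [Finset.sum_const, Finset.card_univ, nsmul_eq_mul]; ring
        have hRd : Rb (φ t) a - R t a ≤ ηR := by
          have := hsimR t a
          rw [abs_le] at this
          linarith [this.2]
        have := mul_le_mul_of_nonneg_left (by linarith :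
          ∑ sb', Tb (φ t) a sb' * Vbs sb' - ∑ s', T t a s' * Vs s'
            ≤ Δ + ηT * (Fintype.card Sb : ℝ) * B) hγ0
        nlinarith
      linarith
  -- close the recursion
  have hΔbd : Δ ≤ ηR + γ * Δ + γ * (ηT * (Fintype.card Sb : ℝ) * B) := by
    obtain ⟨s1, -, hs1⟩ := Finset.exists_mem_eq_sup' (Finset.univ_nonempty (α := S))
      (fun s => |Vs s - Vbs (φ s)|)
    calc Δ = |Vs s1 - Vbs (φ s1)| := hΔ.trans hs1
      _ ≤ _ := key s1
  have hΔfinal : Δ ≤ ηR / (1 - γ) +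
      γ * ηT * (Fintype.card Sb : ℝ) * Rmax / (1 - γ) ^ 2 := by
    have hCeq : γ * (ηT * (Fintype.card Sb : ℝ) * B) =
        γ * ηT * (Fintype.card Sb : ℝ) * Rmax / (1 - γ) := by
      rw [hB]; ring
    have h : (1 - γ) * Δ ≤ ηR + γ * ηT * (Fintype.card Sb : ℝ) * Rmax / (1 - γ) := by
      linarith [hΔbd, hCeq]
    have h2 : Δ ≤ (ηR + γ * ηT * (Fintype.card Sb : ℝ) * Rmax / (1 - γ)) / (1 - γ) := by
      rw [le_div_iff₀ h1γ]; linarith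
    have heq : (ηR + γ * ηT * (Fintype.card Sb : ℝ) * Rmax / (1 - γ)) / (1 - γ) =
        ηR / (1 - γ) + γ * ηT * (Fintype.card Sb : ℝ) * Rmax / (1 - γ) ^ 2 := by
      field_simp
    linarith [heq ▸ h2]
  exact le_trans (hΔle s) hΔfinal
end

section
/- Let M = (S, A, T, R) be a finite MDP with rewards in [0, Rmax], let φ : S → S̄ be a state abstraction, let M̄ = (S̄, A, T̄, R̄) be an abstract MDP such that for all s̄, s̄' ∈ S̄, all s ∈ S with φ(s) = s̄, and all a ∈ A: |T̄(s̄'|s̄,a) − Σ_{s'∈φ⁻¹(s̄')} T(s'|s,a)| ≤ η_T and |R̄(s̄,a) − R(s,a)| ≤ η_R. Let M̂ = (S̄, A, T̂, R̂) be another MDP on S̄ with |T̄(s̄'|s̄,a) − T̂(s̄'|s̄,a)| ≤ ε for all (s̄,a,s̄') and R̂(s̄,a) = R̄(s̄,a) for all (s̄,a). Let π̂* be an abstract policy that is n-step optimal for M̂ for every horizon up to n. Then for every s ∈ S: V^{*,n}_M(s) − V^{π̂*∘φ, n}_M(s) ≤ 2·n·η_R + (n−1)·n·(η_T + ε)·|S̄|·Rmax.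 -/
lemma Vpol_nonneg' {S A : Type*} [Fintype S] (T : S → A → S → ℝ) (R : S → A → ℝ)
    (π : S → A) (hT0 : ∀ s a s', 0 ≤ T s a s') (hR0 : ∀ s a, 0 ≤ R s a) :
    ∀ n s, 0 ≤ Vpol T R π n s := by
  intro n
  induction n with
  | zero => intro s; simp [Vpol]
  | succ k ih =>
    intro s
    have h : 0 ≤ ∑ s' : S, T s (π s) s' * Vpol T R π k s' :=
      Finset.sum_nonneg fun s' _ => mul_nonneg (hT0 _ _ _) (ih s')
    simpa [Vpol] using add_nonneg (hR0 s (π s)) h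

lemma Vpol_le' {S A : Type*} [Fintype S] (T : S → A → S → ℝ) (R : S → A → ℝ)
    (π : S → A) (Rmax : ℝ) (hT0 : ∀ s a s', 0 ≤ T s a s')
    (hT1 : ∀ s a, ∑ s', T s a s' = 1) (hR1 : ∀ s a, R s a ≤ Rmax) :
    ∀ n s, Vpol T R π n s ≤ n * Rmax := by
  intro n
  induction n with
  | zero => intro s; simp [Vpol]
  | succ k ih =>
    intro s
    have h : ∑ s' : S, T s (π s) s' * Vpol T R π k s' ≤ k * Rmax := by
      calc ∑ s' : S, T s (π s) s' * Vpol T R π k s'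
          ≤ ∑ s' : S, T s (π s) s' * (k * Rmax) :=
            Finset.sum_le_sum fun s' _ =>
              mul_le_mul_of_nonneg_left (ih s') (hT0 _ _ _)
        _ = k * Rmax := by rw [← Finset.sum_mul, hT1]; ring
    calc Vpol T R π (k + 1) s = R s (π s) + ∑ s' : S, T s (π s) s' * Vpol T R π k s' := rfl
      _ ≤ Rmax + k * Rmax := add_le_add (hR1 _ _) h
      _ = (k + 1 : ℕ) * Rmax := by push_cast; ring

/-- Regroup a sum over ground states into fibers of the abstraction. -/
lemma sum_fiber' {S Sb : Type*} [Fintype S] [Fintype Sb] [DecidableEq Sb]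
    (φ : S → Sb) (T : S → ℝ) (g : Sb → ℝ) :
    ∑ s' : S, T s' * g (φ s') =
      ∑ sb' : Sb, (∑ s' ∈ Finset.univ.filter (fun s' => φ s' = sb'), T s') * g sb' := by
  rw [← Finset.sum_fiberwise Finset.univ φ (fun s' => T s' * g (φ s'))]
  refine Finset.sum_congr rfl fun j _ => ?_
  rw [Finset.sum_mul]
  exact Finset.sum_congr rfl fun i hi => by rw [(Finset.mem_filter.1 hi).2]

/-- Swapping a transition vector for a pointwise-close one changes an expectation of a
bounded nonnegative function by at most `card * (δ * V0)`. -/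
lemma mismatch' {Sb : Type*} [Fintype Sb] (W Q V : Sb → ℝ) (δ V0 : ℝ)
    (hδ : ∀ sb, |W sb - Q sb| ≤ δ) (hV : ∀ sb, 0 ≤ V sb) (hV1 : ∀ sb, V sb ≤ V0) :
    ∑ sb, W sb * V sb ≤ (∑ sb, Q sb * V sb) + (Fintype.card Sb : ℝ) * (δ * V0) := by
  have h : ∀ sb ∈ (Finset.univ : Finset Sb), W sb * V sb - Q sb * V sb ≤ δ * V0 := by
    intro sb _
    have h1 : (W sb - Q sb) * V sb ≤ |W sb - Q sb| * V sb :=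
      mul_le_mul_of_nonneg_right (le_abs_self _) (hV sb)
    have h2 : |W sb - Q sb| * V sb ≤ δ * V0 :=
      mul_le_mul (hδ sb) (hV1 sb) (hV sb) ((abs_nonneg _).trans (hδ sb))
    nlinarith [h1, h2]
  have := Finset.sum_le_sum h
  rw [Finset.sum_sub_distrib, Finset.sum_const, Finset.card_univ, nsmul_eq_mul] at this
  linarith

theorem stmt11 {S Sb A : Type*} [Fintype S] [Fintype Sb] [Fintype A]
    [Nonempty S] [Nonempty Sb] [Nonempty A] [DecidableEq Sb]
    -- the ground MDP M = (S, A, T, R), rewards in [0, Rmax]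
    (T : S → A → S → ℝ) (R : S → A → ℝ) (Rmax : ℝ) (hRmax : 0 < Rmax)
    (hT0 : ∀ s a s', 0 ≤ T s a s') (hT1 : ∀ s a, ∑ s', T s a s' = 1)
    (hR0 : ∀ s a, 0 ≤ R s a) (hR1 : ∀ s a, R s a ≤ Rmax)
    -- the state abstraction φ : S → Sb
    (φ : S → Sb) (hφ : Function.Surjective φ)
    -- the abstract MDP M̄ = (Sb, A, Tb, Rb)
    (Tb : Sb → A → Sb → ℝ) (Rb : Sb → A → ℝ)
    (hTb0 : ∀ sb a sb', 0 ≤ Tb sb a sb') (hTb1 : ∀ sb a, ∑ sb', Tb sb a sb' = 1)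
    (hRb0 : ∀ sb a, 0 ≤ Rb sb a) (hRb1 : ∀ sb a, Rb sb a ≤ Rmax)
    -- approximate model similarity between M and M̄
    (ηT ηR : ℝ)
    (hsimT : ∀ s a sb', |Tb (φ s) a sb' -
      ∑ s' ∈ Finset.univ.filter (fun s' => φ s' = sb'), T s a s'| ≤ ηT)
    (hsimR : ∀ s a, |Rb (φ s) a - R s a| ≤ ηR)
    -- another MDP M̂ = (Sb, A, Th, Rh) on the abstract state set
    (Th : Sb → A → Sb → ℝ) (Rh : Sb → A → ℝ)
    (hTh0 : ∀ sb a sb', 0 ≤ Th sb a sb') (hTh1 : ∀ sb a, ∑ sb', Th sb a sb' = 1)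
    -- M̂ is ε-close in transitions to M̄ and has the same rewards
    (ε : ℝ)
    (hclose : ∀ sb a sb', |Tb sb a sb' - Th sb a sb'| ≤ ε)
    (hRh : ∀ sb a, Rh sb a = Rb sb a)
    -- the abstract policy πh is n-step optimal in M̂ for every horizon up to n
    (πh : Sb → A) (n : ℕ)
    (hopt : ∀ k ≤ n, ∀ sb, Vpol Th Rh πh k sb = Vopt Th Rh k sb)
    (s : S) :
    Vopt T R n s - Vpol T R (fun s => πh (φ s)) n s
      ≤ 2 * (n : ℝ) * ηR + ((n : ℝ) - 1) * (n : ℝ) * (ηT + ε) * (Fintype.card Sb : ℝ) * Rmax := by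
  set C : ℝ := (Fintype.card Sb : ℝ) with hC
  set D : ℝ := C * ((ηT + ε) * Rmax) with hD
  set π' : S → A := fun s => πh (φ s) with hπ'
  -- per-entry transition discrepancy between aggregated T and Th
  have hδ : ∀ (s : S) (a : A) (sb' : Sb),
      |(∑ s' ∈ Finset.univ.filter (fun s' => φ s' = sb'), T s a s') - Th (φ s) a sb'|
        ≤ ηT + ε := by
    intro s a sb'
    have h1 := hsimT s a sb'
    have h2 := hclose (φ s) a sb'
    calc |(∑ s' ∈ Finset.univ.filter (fun s' => φ s' = sb'), T s a s') - Th (φ s) a sb'|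
        ≤ |(∑ s' ∈ Finset.univ.filter (fun s' => φ s' = sb'), T s a s') - Tb (φ s) a sb'|
          + |Tb (φ s) a sb' - Th (φ s) a sb'| := abs_sub_le _ _ _
      _ ≤ ηT + ε := add_le_add (by rwa [abs_sub_comm]) h2
  -- bounds on hat-MDP values
  have hRh0 : ∀ sb a, 0 ≤ Rh sb a := fun sb a => (hRh sb a) ▸ hRb0 sb a
  have hRh1 : ∀ sb a, Rh sb a ≤ Rmax := fun sb a => (hRh sb a) ▸ hRb1 sb a
  have hVp0 : ∀ k sb, 0 ≤ Vpol Th Rh πh k sb := Vpol_nonneg' Th Rh πh hTh0 hRh0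
  have hVp1 : ∀ k sb, Vpol Th Rh πh k sb ≤ k * Rmax := Vpol_le' Th Rh πh Rmax hTh0 hTh1 hRh1
  have hVo0 : ∀ k sb, 0 ≤ Vopt Th Rh k sb := by
    intro k
    induction k with
    | zero => intro sb; simp [Vopt]
    | succ m ih =>
      intro sb
      refine le_trans ?_ (Finset.le_sup' (s := (Finset.univ : Finset A))
        (fun a => Rh sb a + ∑ sb' : Sb, Th sb a sb' * Vopt Th Rh m sb')
        (Finset.mem_univ (Classical.arbitrary A)))
      exact add_nonneg (hRh0 _ _)
        (Finset.sum_nonneg fun sb' _ => mul_nonneg (hTh0 _ _ _) (ih sb'))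
  have hVo1 : ∀ k sb, Vopt Th Rh k sb ≤ k * Rmax := by
    intro k
    induction k with
    | zero => intro sb; simp [Vopt]
    | succ m ih =>
      intro sb
      refine Finset.sup'_le _ _ fun a _ => ?_
      have h : ∑ sb' : Sb, Th sb a sb' * Vopt Th Rh m sb' ≤ m * Rmax := by
        calc ∑ sb' : Sb, Th sb a sb' * Vopt Th Rh m sb'
            ≤ ∑ sb' : Sb, Th sb a sb' * (m * Rmax) :=
              Finset.sum_le_sum fun sb' _ =>
                mul_le_mul_of_nonneg_left (ih sb') (hTh0 _ _ _)
          _ = m * Rmax := by rw [← Finset.sum_mul, hTh1]; ring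
      calc Rh sb a + ∑ sb' : Sb, Th sb a sb' * Vopt Th Rh m sb'
          ≤ Rmax + m * Rmax := add_le_add (hRh1 _ _) h
        _ = (m + 1 : ℕ) * Rmax := by push_cast; ring
  -- the cumulative error bound
  set B : ℕ → ℝ := fun k => k * ηR + ((k : ℝ) * ((k : ℝ) - 1) / 2) * D with hB
  have hBstep : ∀ k : ℕ, B (k + 1) = B k + ηR + k * D := by
    intro k; simp only [hB]; push_cast; ring
  -- optimal-value side: V*_M ≤ V*_M̂ ∘ φ + B
  have hoptside : ∀ k, ∀ s : S, Vopt T R k s ≤ Vopt Th Rh k (φ s) + B k := by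
    intro k
    induction k with
    | zero => intro s; simp [Vopt, hB]
    | succ m ih =>
      intro s
      refine Finset.sup'_le _ _ fun a _ => ?_
      have hstep1 : ∑ s' : S, T s a s' * Vopt T R m s'
          ≤ (∑ s' : S, T s a s' * Vopt Th Rh m (φ s')) + B m := by
        calc ∑ s' : S, T s a s' * Vopt T R m s'
            ≤ ∑ s' : S, T s a s' * (Vopt Th Rh m (φ s') + B m) :=
              Finset.sum_le_sum fun s' _ =>
                mul_le_mul_of_nonneg_left (ih s') (hT0 _ _ _)
          _ = (∑ s' : S, T s a s' * Vopt Th Rh m (φ s')) + (∑ s' : S, T s a s') * B m := by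
              rw [Finset.sum_mul, ← Finset.sum_add_distrib]
              exact Finset.sum_congr rfl fun s' _ => by ring
          _ = (∑ s' : S, T s a s' * Vopt Th Rh m (φ s')) + B m := by rw [hT1]; ring
      have hstep2 : ∑ s' : S, T s a s' * Vopt Th Rh m (φ s')
          ≤ (∑ sb' : Sb, Th (φ s) a sb' * Vopt Th Rh m sb') + m * D := by
        rw [sum_fiber' φ (T s a) (Vopt Th Rh m)]
        have := mismatch'
          (fun sb' => ∑ s' ∈ Finset.univ.filter (fun s' => φ s' = sb'), T s a s')
          (Th (φ s) a) (Vopt Th Rh m) (ηT + ε) (m * Rmax)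
          (hδ s a) (hVo0 m) (hVo1 m)
        calc ∑ sb' : Sb, (∑ s' ∈ Finset.univ.filter (fun s' => φ s' = sb'), T s a s')
              * Vopt Th Rh m sb'
            ≤ (∑ sb' : Sb, Th (φ s) a sb' * Vopt Th Rh m sb')
              + C * ((ηT + ε) * (m * Rmax)) := this
          _ = (∑ sb' : Sb, Th (φ s) a sb' * Vopt Th Rh m sb') + m * D := by
              rw [hD]; ring
      have hr : R s a ≤ Rh (φ s) a + ηR := by
        have := hsimR s a
        rw [hRh]
        have := abs_le.1 this
        linarith [this.1]
      have hsup : Rh (φ s) a + ∑ sb' : Sb, Th (φ s) a sb' * Vopt Th Rh m sb'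
          ≤ Vopt Th Rh (m + 1) (φ s) :=
        Finset.le_sup' (fun a => Rh (φ s) a + ∑ sb' : Sb, Th (φ s) a sb' * Vopt Th Rh m sb')
          (Finset.mem_univ a)
      calc R s a + ∑ s' : S, T s a s' * Vopt T R m s'
          ≤ (Rh (φ s) a + ηR)
            + (((∑ sb' : Sb, Th (φ s) a sb' * Vopt Th Rh m sb') + m * D) + B m) := by
            have := hstep1.trans (by linarith [hstep2] :
              (∑ s' : S, T s a s' * Vopt Th Rh m (φ s')) + B m
                ≤ ((∑ sb' : Sb, Th (φ s) a sb' * Vopt Th Rh m sb') + m * D) + B m)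
            exact add_le_add hr this
        _ ≤ Vopt Th Rh (m + 1) (φ s) + B (m + 1) := by
            rw [hBstep m]; linarith [hsup]
  -- policy side: V^π̂_M̂ ∘ φ ≤ V^{π̂∘φ}_M + B
  have hpolside : ∀ k, ∀ s : S, Vpol Th Rh πh k (φ s) ≤ Vpol T R π' k s + B k := by
    intro k
    induction k with
    | zero => intro s; simp [Vpol, hB]
    | succ m ih =>
      intro s
      have ha : π' s = πh (φ s) := rfl
      have hr : Rh (φ s) (πh (φ s)) ≤ R s (π' s) + ηR := by
        rw [hRh, ha]
        have := abs_le.1 (hsimR s (πh (φ s)))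
        linarith [this.2]
      have hstep2 : ∑ sb' : Sb, Th (φ s) (πh (φ s)) sb' * Vpol Th Rh πh m sb'
          ≤ (∑ sb' : Sb, (∑ s' ∈ Finset.univ.filter (fun s' => φ s' = sb'),
              T s (π' s) s') * Vpol Th Rh πh m sb') + m * D := by
        have hδ' : ∀ sb', |Th (φ s) (πh (φ s)) sb'
            - ∑ s' ∈ Finset.univ.filter (fun s' => φ s' = sb'), T s (π' s) s'| ≤ ηT + ε := by
          intro sb'
          rw [abs_sub_comm, ha]
          exact hδ s (πh (φ s)) sb'
        have := mismatch' (Th (φ s) (πh (φ s)))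
          (fun sb' => ∑ s' ∈ Finset.univ.filter (fun s' => φ s' = sb'), T s (π' s) s')
          (Vpol Th Rh πh m) (ηT + ε) (m * Rmax) hδ' (hVp0 m) (hVp1 m)
        calc ∑ sb' : Sb, Th (φ s) (πh (φ s)) sb' * Vpol Th Rh πh m sb'
            ≤ (∑ sb' : Sb, (∑ s' ∈ Finset.univ.filter (fun s' => φ s' = sb'),
                T s (π' s) s') * Vpol Th Rh πh m sb') + C * ((ηT + ε) * (m * Rmax)) := this
          _ = _ + m * D := by rw [hD]; ring
      have hstep3 : ∑ sb' : Sb, (∑ s' ∈ Finset.univ.filter (fun s' => φ s' = sb'),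
            T s (π' s) s') * Vpol Th Rh πh m sb'
          ≤ (∑ s' : S, T s (π' s) s' * Vpol T R π' m s') + B m := by
        rw [← sum_fiber' φ (T s (π' s)) (Vpol Th Rh πh m)]
        calc ∑ s' : S, T s (π' s) s' * Vpol Th Rh πh m (φ s')
            ≤ ∑ s' : S, T s (π' s) s' * (Vpol T R π' m s' + B m) :=
              Finset.sum_le_sum fun s' _ =>
                mul_le_mul_of_nonneg_left (ih s') (hT0 _ _ _)
          _ = (∑ s' : S, T s (π' s) s' * Vpol T R π' m s') + (∑ s' : S, T s (π' s) s') * B m := by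
              rw [Finset.sum_mul, ← Finset.sum_add_distrib]
              exact Finset.sum_congr rfl fun s' _ => by ring
          _ = _ + B m := by rw [hT1]; ring
      calc Vpol Th Rh πh (m + 1) (φ s)
          = Rh (φ s) (πh (φ s)) + ∑ sb' : Sb, Th (φ s) (πh (φ s)) sb' * Vpol Th Rh πh m sb' := rfl
        _ ≤ (R s (π' s) + ηR) + (((∑ s' : S, T s (π' s) s' * Vpol T R π' m s') + B m) + m * D) := by
            linarith [hr, hstep2, hstep3]
        _ = (R s (π' s) + ∑ s' : S, T s (π' s) s' * Vpol T R π' m s') + B (m + 1) := by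
            rw [hBstep m]; ring
        _ = Vpol T R π' (m + 1) s + B (m + 1) := rfl
  -- assemble
  have h1 := hoptside n s
  have h2 := hpolside n s
  have h3 := hopt n le_rfl (φ s)
  have hBn : 2 * B n = 2 * (n : ℝ) * ηR + ((n : ℝ) - 1) * (n : ℝ) * (ηT + ε) * C * Rmax := by
    simp only [hB, hD]; ring
  rw [h3] at h2
  linarith
end

section
/- Let M = (S, A, T, R) be a finite MDP, φ : S → S̄ a state abstraction with |S̄| ≥ 2, and for each pair (s̄, a) ∈ S̄ × A fix a prototype state x_{s̄,a} ∈ φ⁻¹(s̄). Suppose that for each (s̄,a) we draw m independent samples s'_{(s̄,a),1}, …, s'_{(s̄,a),m} from the distribution T(·|x_{s̄,a}, a), with all samples across all pairs mutually independent, and define the empirical abstract transition function T̄_Y(s̄'|s̄,a) = (1/m)·Σ_{i=1}^m 1{φ(s'_{(s̄,a),i}) = s̄'} and the target T̄_{ω_X}(s̄'|s̄,a) = Σ_{s'∈φ⁻¹(s̄')} T(s'|x_{s̄,a}, a). Then for any δ ∈ (0,1) and ε ∈ (0,2), if m ≥ 2·(ln(2^{|S̄|} − 2) − ln(δ/(|S̄|·|A|)))/ε²,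 then with probability at least 1 − δ: for every (s̄,a) ∈ S̄ × A, Σ_{s̄'∈S̄} |T̄_Y(s̄'|s̄,a) − T̄_{ω_X}(s̄'|s̄,a)| ≤ ε. -/
/-!
For a fixed pair `(s̄, a)` and a set `B` of abstract states, the indicators `1{φ(s'ᵢ) ∈ B}` of
the `m` samples are independent Bernoulli variables with mean `p_B = T̄_{ω_X}(B | s̄, a)`, so by
Hoeffding's inequality the empirical frequency of `B` exceeds `p_B + ε/2` with probability at most
`exp (-m ε² / 2)`. For two probability vectors on `S̄` the `L¹` distance is twice the largest
difference of the masses they give to a set, and this largest difference is attained at a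
nonempty proper subset unless it vanishes. A union bound over the `|S̄| |A| (2^|S̄| - 2)` pairs and
subsets, each event having probability at most `δ / (|S̄| |A| (2^|S̄| - 2))` by the choice of `m`,
gives the theorem.
-/

open MeasureTheory ProbabilityTheory Finset

theorem measure_card_mul_add_le_sum_indicator_le {Ω ι α : Type*} {mΩ : MeasurableSpace Ω}
    {μ : Measure Ω} [IsProbabilityMeasure μ] [MeasurableSpace α] [Fintype ι] {Z : ι → Ω → α}
    (hZ : ∀ i, Measurable (Z i)) (hindep : iIndepFun Z μ) {s : Set α} (hs : MeasurableSet s)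
    {p : ℝ} (hp : ∀ i, μ.real (Z i ⁻¹' s) = p) {t : ℝ} (ht : 0 ≤ t) :
    μ {ω | (Fintype.card ι : ℝ) * (p + t) ≤ ∑ i, (Z i ⁻¹' s).indicator 1 ω}
      ≤ ENNReal.ofReal (Real.exp (-2 * Fintype.card ι * t ^ 2)) := by
  set n : ℝ := (Fintype.card ι : ℝ)
  have hsubG : ∀ i, HasSubgaussianMGF (fun ω ↦ (Z i ⁻¹' s).indicator 1 ω - p)
      ((‖(1 : ℝ) - 0‖₊ / 2) ^ 2) μ := by
    intro i
    have hmeas : MeasurableSet (Z i ⁻¹' s) := hZ i hs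
    rw [← hp i, ← integral_indicator_one hmeas]
    refine hasSubgaussianMGF_of_mem_Icc
      ((measurable_one.indicator hmeas).aemeasurable) (ae_of_all _ fun ω ↦ ?_)
    by_cases h : ω ∈ Z i ⁻¹' s <;> simp [h]
  have hcentered : iIndepFun (fun i ω ↦ (Z i ⁻¹' s).indicator 1 ω - p) μ :=
    hindep.comp (fun _ a ↦ s.indicator (1 : α → ℝ) a - p)
      (fun _ ↦ (measurable_one.indicator hs).sub_const p)
  have hhoeffding := HasSubgaussianMGF.measure_sum_ge_le_of_iIndepFun hcentered
    (s := univ) (fun i _ ↦ hsubG i) (by positivity : 0 ≤ n * t)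
  have hset : {ω | n * (p + t) ≤ ∑ i, (Z i ⁻¹' s).indicator 1 ω}
      = {ω | n * t ≤ ∑ i, ((Z i ⁻¹' s).indicator 1 ω - p)} := by
    ext ω
    simp only [Set.mem_ofPred_eq, sum_sub_distrib, sum_const, card_univ, nsmul_eq_mul]
    constructor <;> intro h <;> linarith
  have hexponent : -(n * t) ^ 2 / (2 * ((∑ _i : ι, (‖(1 : ℝ) - 0‖₊ / 2) ^ 2 : NNReal) : ℝ))
      = -2 * n * t ^ 2 := by
    rcases eq_or_ne n 0 with hn | hn
    · simp [hn]
    · norm_num [n] at hn ⊢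
      field_simp
      ring
  rw [hset, ← ofReal_measureReal]
  exact ENNReal.ofReal_le_ofReal (hhoeffding.trans_eq (by rw [hexponent]))

theorem one_sub_ofReal_le_measure_of_forall_measure_le {Ω ι : Type*} {mΩ : MeasurableSpace Ω}
    {μ : Measure Ω} [IsProbabilityMeasure μ] (s : Finset ι) {E : ι → Set Ω} {c δ : ℝ}
    (hE : ∀ i ∈ s, μ (E i) ≤ ENNReal.ofReal c) (hδ : #s * c = δ) {G : Set Ω}
    (hG : ∀ ω, (∀ i ∈ s, ω ∉ E i) → ω ∈ G) :
    1 - ENNReal.ofReal δ ≤ μ G := by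
  have hunion : μ (⋃ i ∈ s, E i) ≤ ENNReal.ofReal δ := by
    rw [← hδ, ENNReal.ofReal_mul (Nat.cast_nonneg _), ENNReal.ofReal_natCast]
    calc μ (⋃ i ∈ s, E i) ≤ ∑ i ∈ s, μ (E i) := measure_biUnion_finset_le s E
      _ ≤ ∑ _i ∈ s, ENNReal.ofReal c := sum_le_sum hE
      _ = #s * ENNReal.ofReal c := by rw [sum_const, nsmul_eq_mul]
  calc 1 - ENNReal.ofReal δ ≤ 1 - μ (⋃ i ∈ s, E i) := tsub_le_tsub_left hunion 1
    _ ≤ μ (⋃ i ∈ s, E i)ᶜ := by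
        rw [tsub_le_iff_right, add_comm, ← measure_univ (μ := μ)]
        exact measure_univ_le_add_compl _
    _ ≤ μ G := measure_mono fun ω hω ↦ hG ω (by simpa using hω)

section TotalVariation

variable {α : Type*} [Fintype α] {f g : α → ℝ}

theorem sum_abs_sub_eq_two_mul_sum_filter_lt (hfg : ∑ i, f i = ∑ i, g i) :
    ∑ i, |f i - g i| = 2 * ∑ i with g i < f i, (f i - g i) := by
  have hpointwise : ∀ i,
      |f i - g i| = 2 * (if g i < f i then f i - g i else 0) - (f i - g i) := by
    intro i
    split_ifs with h
    · rw [abs_of_pos (sub_pos.mpr h)]; ring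
    · rw [abs_of_nonpos (by linarith [not_lt.mp h])]; ring
  have hzero : ∑ i, (f i - g i) = 0 := by rw [sum_sub_distrib, hfg, sub_self]
  rw [sum_congr rfl fun i _ ↦ hpointwise i, sum_sub_distrib, hzero, sub_zero, ← mul_sum,
    ← sum_filter]

theorem sum_abs_sub_le_of_forall_sum_le (hfg : ∑ i, f i = ∑ i, g i) {r : ℝ} (hr : 0 ≤ r)
    (h : ∀ B : Finset α, B.Nonempty → B ≠ univ → ∑ i ∈ B, f i ≤ ∑ i ∈ B, g i + r) :
    ∑ i, |f i - g i| ≤ 2 * r := by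
  rw [sum_abs_sub_eq_two_mul_sum_filter_lt hfg]
  set B := univ.filter fun i ↦ g i < f i
  rcases B.eq_empty_or_nonempty with hB | hB
  · simp [hB, hr]
  by_cases hBu : B = univ
  · simp [hBu, sum_sub_distrib, hfg, hr]
  · have := h B hB hBu
    rw [sum_sub_distrib]
    linarith

end TotalVariation

theorem sum_abs_empirical_sub_le_s13 {β : Type*} [Fintype β] [DecidableEq β] {m : ℕ} (hm : 0 < m)
    (z : Fin m → β) {q : β → ℝ} (hq : ∑ b, q b = 1) {ε : ℝ} (hε : 0 ≤ ε)
    (h : ∀ B : Finset β, B.Nonempty → B ≠ univ →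
      ∑ i, (if z i ∈ B then (1 : ℝ) else 0) < m * (∑ b ∈ B, q b + ε / 2)) :
    ∑ b, |1 / (m : ℝ) * ∑ i, (if z i = b then (1 : ℝ) else 0) - q b| ≤ ε := by
  have hm' : (0 : ℝ) < m := Nat.cast_pos.mpr hm
  have hfrequency : ∀ B : Finset β,
      ∑ b ∈ B, 1 / (m : ℝ) * ∑ i, (if z i = b then (1 : ℝ) else 0)
        = 1 / m * ∑ i, if z i ∈ B then 1 else 0 := fun B ↦ by
    rw [← mul_sum, sum_comm]
    exact congrArg _ (sum_congr rfl fun i _ ↦ sum_ite_eq B (z i) _)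
  refine (sum_abs_sub_le_of_forall_sum_le ?_ (div_nonneg hε zero_le_two) fun B hB hBu ↦ ?_).trans_eq
    (by ring)
  · rw [hfrequency, hq]
    simp [hm'.ne']
  · rw [hfrequency, one_div_mul_eq_div, div_le_iff₀ hm']
    linarith [h B hB hBu]

theorem cast_card_filter_nonempty_ne_univ (α : Type*) [Fintype α] [DecidableEq α]
    [Nonempty α] : (#{B : Finset α | B.Nonempty ∧ B ≠ univ} : ℝ) = 2 ^ Fintype.card α - 2 := by
  have hfilter : ({B : Finset α | B.Nonempty ∧ B ≠ univ} : Finset (Finset α))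
      = univ \ {∅, univ} := by
    ext B
    simp [nonempty_iff_ne_empty]
  have htwo : 2 ≤ 2 ^ Fintype.card α := Nat.le_self_pow Fintype.card_ne_zero 2
  rw [hfilter, card_sdiff_of_subset (subset_univ _), card_univ, Fintype.card_finset,
    card_pair univ_nonempty.ne_empty.symm, Nat.cast_sub htwo]
  norm_num

section SampleSize

variable {k l m : ℕ} {δ ε : ℝ}

theorem two_le_two_pow_sub_two (hk : 2 ≤ k) : (2 : ℝ) ≤ 2 ^ k - 2 := by
  have : (2 : ℝ) ^ 2 ≤ 2 ^ k := pow_le_pow_right₀ (by norm_num) hk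
  linarith

theorem exp_neg_mul_sq_div_two_le_of_sample_size (hk : 2 ≤ k) (hl : l ≠ 0) (hδ : 0 < δ)
    (hε : 0 < ε)
    (hm : 2 * (Real.log ((2 : ℝ) ^ k - 2) - Real.log (δ / (k * l))) / ε ^ 2 ≤ m) :
    Real.exp (-(m * ε ^ 2 / 2)) ≤ δ / (k * l * (2 ^ k - 2)) := by
  have hpow := two_le_two_pow_sub_two hk
  have hkl : (0 : ℝ) < k * l := by positivity
  rw [div_le_iff₀ (by positivity)] at hm
  rw [← div_div, ← Real.exp_log (by positivity : 0 < δ / (k * l) / (2 ^ k - 2)), Real.exp_le_exp,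
    Real.log_div (by positivity) (by linarith)]
  linarith

theorem pos_of_sample_size (hk : 2 ≤ k) (hl : l ≠ 0) (hδ : 0 < δ) (hδ1 : δ < 1) (hε : 0 < ε)
    (hm : 2 * (Real.log ((2 : ℝ) ^ k - 2) - Real.log (δ / (k * l))) / ε ^ 2 ≤ m) : 0 < m := by
  have hbound := exp_neg_mul_sq_div_two_le_of_sample_size hk hl hδ hε hm
  have hcount : (1 : ℝ) ≤ k * l * (2 ^ k - 2) := by
    have hkl : (1 : ℝ) ≤ k * l := by
      exact_mod_cast Nat.one_le_iff_ne_zero.mpr (mul_ne_zero (by omega) hl)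
    nlinarith [two_le_two_pow_sub_two hk]
  by_contra! hm0
  have : Real.exp (-(m * ε ^ 2 / 2)) = 1 := by simp [Nat.le_zero.mp hm0]
  have : δ / (k * l * (2 ^ k - 2)) ≤ δ := div_le_self hδ.le hcount
  linarith

end SampleSize

theorem stmt13_general {Ω : Type*} [MeasurableSpace Ω] (μ : Measure Ω) [IsProbabilityMeasure μ]
    {S Sb A : Type*} [Fintype S] [Fintype Sb] [Fintype A]
    [Nonempty Sb] [Nonempty A] [DecidableEq Sb]
    [MeasurableSpace S] [MeasurableSingletonClass S]
    -- the MDP transition function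
    (T : S → A → S → ℝ)
    (hT1 : ∀ s a, ∑ s', T s a s' = 1)
    -- the state abstraction with |Sb| ≥ 2
    (φ : S → Sb) (hcard : 2 ≤ Fintype.card Sb)
    -- the prototype states x (sb, a) ∈ φ⁻¹ sb
    (x : Sb → A → S)
    -- for each pair (sb, a), m samples from T(·| x (sb,a), a), all mutually independent
    (m : ℕ) (Y : (Sb × A) × Fin m → Ω → S) (hYmeas : ∀ q, Measurable (Y q))
    (hindep : iIndepFun Y μ)
    (hdist : ∀ (q : (Sb × A) × Fin m) (s' : S),
      (μ {ω | Y q ω = s'}).toReal = T (x q.1.1 q.1.2) q.1.2 s')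
    (δ ε : ℝ) (hδ0 : 0 < δ) (hδ1 : δ < 1) (hε0 : 0 < ε)
    -- the sample-size requirement
    (hm : 2 * (Real.log ((2 : ℝ) ^ (Fintype.card Sb) - 2)
        - Real.log (δ / ((Fintype.card Sb : ℝ) * (Fintype.card A : ℝ)))) / ε ^ 2 ≤ (m : ℝ)) :
    -- with probability at least 1 − δ, every pair's empirical abstract transition
    -- function is ε-close (in L1) to its target
    1 - ENNReal.ofReal δ
      ≤ μ {ω | ∀ (sb : Sb) (a : A), ∑ sb' : Sb,
          |(1 / (m : ℝ)) * ∑ i : Fin m, (if φ (Y ((sb, a), i) ω) = sb' then (1 : ℝ) else 0)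
            - ∑ s' ∈ Finset.univ.filter (fun s' => φ s' = sb'), T (x sb a) a s'| ≤ ε} := by
  set J : Finset (Finset Sb) := {B | B.Nonempty ∧ B ≠ univ}
  set c : ℝ := δ / (Fintype.card Sb * Fintype.card A * (2 ^ Fintype.card Sb - 2)) with hc_def
  have hc := exp_neg_mul_sq_div_two_le_of_sample_size hcard Fintype.card_ne_zero hδ0 hε0 hm
  have hm0 := pos_of_sample_size hcard Fintype.card_ne_zero hδ0 hδ1 hε0 hm
  have hcount : (#((univ : Finset (Sb × A)) ×ˢ J) : ℝ) * c = δ := by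
    have := two_le_two_pow_sub_two hcard
    rw [card_product, card_univ, Fintype.card_prod, Nat.cast_mul, Nat.cast_mul,
      cast_card_filter_nonempty_ne_univ, hc_def, mul_div_cancel₀ _ (by positivity)]
  let P : Sb × A → Finset Sb → ℝ := fun q B ↦ ∑ s' with φ s' ∈ B, T (x q.1 q.2) q.2 s'
  have hP : ∀ q i B, μ.real (Y (q, i) ⁻¹' ↑({s' | φ s' ∈ B} : Finset S)) = P q B := fun q i B ↦ by
    rw [← sum_measureReal_preimage_singleton _ fun s' _ ↦ hYmeas _ (measurableSet_singleton s')]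
    exact sum_congr rfl fun s' _ ↦ hdist (q, i) s'
  let E : (Sb × A) × Finset Sb → Set Ω := fun j ↦ {ω | (m : ℝ) * (P j.1 j.2 + ε / 2) ≤
      ∑ i : Fin m, (Y (j.1, i) ⁻¹' ↑({s' | φ s' ∈ j.2} : Finset S)).indicator 1 ω}
  have hE : ∀ j ∈ (univ : Finset (Sb × A)) ×ˢ J, μ (E j) ≤ ENNReal.ofReal c := fun j _ ↦ by
    have h := measure_card_mul_add_le_sum_indicator_le (Z := fun i : Fin m ↦ Y (j.1, i))
      (fun i ↦ hYmeas _) (hindep.precomp (Prod.mk_right_injective j.1))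
      (Set.toFinite _).measurableSet (fun i ↦ hP j.1 i j.2) (by positivity : 0 ≤ ε / 2)
    rw [Fintype.card_fin] at h
    exact h.trans (ENNReal.ofReal_le_ofReal (le_of_eq_of_le (by ring_nf) hc))
  refine one_sub_ofReal_le_measure_of_forall_measure_le _ hE hcount fun ω hω sb a ↦ ?_
  refine sum_abs_empirical_sub_le_s13 hm0 _ (by rw [sum_fiberwise]; exact hT1 _ _) hε0.le
    fun B hB hBu ↦ ?_
  have hgood := hω ((sb, a), B) (mem_product.mpr ⟨mem_univ _, mem_filter.mpr ⟨mem_univ _, hB, hBu⟩⟩)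
  have hindicator : ∀ i, (Y ((sb, a), i) ⁻¹' ↑({s' | φ s' ∈ B} : Finset S)).indicator 1 ω
      = if φ (Y ((sb, a), i) ω) ∈ B then (1 : ℝ) else 0 := fun i ↦ by
    by_cases h : φ (Y ((sb, a), i) ω) ∈ B <;> simp [h]
  simp only [E, Set.mem_ofPred_eq, not_le, hindicator] at hgood
  rwa [sum_fiberwise_eq_sum_filter]

theorem stmt13 {Ω : Type*} [MeasurableSpace Ω] (μ : Measure Ω) [IsProbabilityMeasure μ]
    {S Sb A : Type*} [Fintype S] [Fintype Sb] [Fintype A]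
    [Nonempty S] [Nonempty Sb] [Nonempty A] [DecidableEq S] [DecidableEq Sb]
    [MeasurableSpace S] [MeasurableSingletonClass S]
    -- the MDP transition function
    (T : S → A → S → ℝ)
    (hT0 : ∀ s a s', 0 ≤ T s a s') (hT1 : ∀ s a, ∑ s', T s a s' = 1)
    -- the state abstraction with |Sb| ≥ 2
    (φ : S → Sb) (hφ : Function.Surjective φ) (hcard : 2 ≤ Fintype.card Sb)
    -- the prototype states x (sb, a) ∈ φ⁻¹ sb
    (x : Sb → A → S) (hx : ∀ sb a, φ (x sb a) = sb)
    -- for each pair (sb, a), m samples from T(·| x (sb,a), a), all mutually independent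
    (m : ℕ) (Y : (Sb × A) × Fin m → Ω → S) (hYmeas : ∀ q, Measurable (Y q))
    (hindep : iIndepFun Y μ)
    (hdist : ∀ (q : (Sb × A) × Fin m) (s' : S),
      (μ {ω | Y q ω = s'}).toReal = T (x q.1.1 q.1.2) q.1.2 s')
    (δ ε : ℝ) (hδ0 : 0 < δ) (hδ1 : δ < 1) (hε0 : 0 < ε) (hε2 : ε < 2)
    -- the sample-size requirement
    (hm : 2 * (Real.log ((2 : ℝ) ^ (Fintype.card Sb) - 2)
        - Real.log (δ / ((Fintype.card Sb : ℝ) * (Fintype.card A : ℝ)))) / ε ^ 2 ≤ (m : ℝ)) :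
    -- with probability at least 1 − δ, every pair's empirical abstract transition
    -- function is ε-close (in L1) to its target
    1 - ENNReal.ofReal δ
      ≤ μ {ω | ∀ (sb : Sb) (a : A), ∑ sb' : Sb,
          |(1 / (m : ℝ)) * ∑ i : Fin m, (if φ (Y ((sb, a), i) ω) = sb' then (1 : ℝ) else 0)
            - ∑ s' ∈ Finset.univ.filter (fun s' => φ s' = sb'), T (x sb a) a s'| ≤ ε} :=
  stmt13_general μ T hT1 φ hcard x m Y hYmeas hindep hdist δ ε hδ0 hδ1 hε0 hm
end
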